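/- arXiv:1610.02557 — 10 statements merged into one kernel-verified Lean document; each statement's English description precedes it below -/
import Mathlib

section
/- Let X be a Banach lattice, ε ≥ 0, and let T : X → X be a linear map that is ε-band preserving. Then for every band projection P on X and every x ∈ X with P x = 0, one has ‖P (T x)‖ ≤ ε·‖x‖. -/
/-- `T` is `ε`-band preserving: for every `x` and every `y ≥ 0` disjoint from `x`,
`‖|T x| ⊓ y‖ ≤ ε * ‖x‖`. -/
def IsEpsBandPreserving {X : Type*} [NormedAddCommGroup X] [Lattice X]
    (ε : ℝ) (T : X → X) : Prop :=
  ∀ x y : X, 0 ≤ y → |x| ⊓ y = 0 → ‖|T x| ⊓ y‖ ≤ ε * ‖x‖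

/-- A band projection: a linear map `P` with `P ∘ P = P` and `0 ≤ P x ≤ x` for `x ≥ 0`. -/
def IsBandProjection {X : Type*} [NormedAddCommGroup X] [Lattice X] [HasSolidNorm X]
    [IsOrderedAddMonoid X] [Module ℝ X]
    (P : X →ₗ[ℝ] X) : Prop :=
  (∀ x, P (P x) = P x) ∧ ∀ x : X, 0 ≤ x → 0 ≤ P x ∧ P x ≤ x

/-!
Positivity of `P` and of `1 - P` does all the work. From `P x = 0` one gets `P |x| = 0`
(`P x⁺ = P x⁻` lies below `x⁺ ⊓ x⁻ = 0`), and then every `y ≥ 0` fixed by `P` is disjoint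
from `|x|`. Applying this to `y = P |T x| ≤ |T x|` together with `|P (T x)| ≤ y`, the
`ε`-band preserving estimate for `x` and `y` bounds `‖P (T x)‖` by `‖y‖ ≤ ε * ‖x‖`.
-/

namespace IsBandProjection

variable {X : Type*} [NormedAddCommGroup X] [Lattice X] [HasSolidNorm X]
  [IsOrderedAddMonoid X] [Module ℝ X] {P : X →ₗ[ℝ] X}

lemma map_nonneg (hP : IsBandProjection P) {z : X} (hz : 0 ≤ z) : 0 ≤ P z :=
  (hP.2 z hz).1

lemma map_le_self (hP : IsBandProjection P) {z : X} (hz : 0 ≤ z) : P z ≤ z :=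
  (hP.2 z hz).2

lemma monotone (hP : IsBandProjection P) : Monotone P := fun a b hab => by
  simpa only [map_sub, sub_nonneg] using hP.map_nonneg (sub_nonneg.2 hab)

lemma sub_map_mono (hP : IsBandProjection P) {a b : X} (hab : a ≤ b) : a - P a ≤ b - P b := by
  have := sub_nonneg.2 (hP.map_le_self (sub_nonneg.2 hab))
  rw [← sub_nonneg]
  convert this using 1
  rw [map_sub]
  abel

lemma abs_map_le (hP : IsBandProjection P) (z : X) : |P z| ≤ P |z| :=
  abs_le'.2 ⟨hP.monotone (le_abs_self z),
    by simpa only [map_neg] using hP.monotone (neg_le_abs z)⟩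

lemma map_abs_eq_zero (hP : IsBandProjection P) {z : X} (hz : P z = 0) : P |z| = 0 := by
  have hparts : P z⁺ = P z⁻ := by
    rw [← sub_eq_zero, ← map_sub, posPart_sub_negPart, hz]
  have hpos : P z⁺ = 0 := by
    refine le_antisymm ?_ (hP.map_nonneg (posPart_nonneg z))
    calc P z⁺ ≤ z⁺ ⊓ z⁻ :=
          le_inf (hP.map_le_self (posPart_nonneg z))
            (hparts ▸ hP.map_le_self (negPart_nonneg z))
      _ = 0 := posPart_inf_negPart_eq_zero z
  rw [← posPart_add_negPart z, map_add, ← hparts, hpos, add_zero]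

lemma abs_inf_eq_zero_of_map_eq_zero (hP : IsBandProjection P) {z y : X} (hz : P z = 0)
    (hy : 0 ≤ y) (hPy : P y = y) : |z| ⊓ y = 0 := by
  set u := |z| ⊓ y
  have hu : 0 ≤ u := le_inf (abs_nonneg z) hy
  have hPu : P u = 0 :=
    le_antisymm (hP.map_abs_eq_zero hz ▸ hP.monotone inf_le_left) (hP.map_nonneg hu)
  have hle := hP.sub_map_mono (inf_le_right : u ≤ y)
  rw [hPu, hPy, sub_zero, sub_self] at hle
  exact le_antisymm hle hu

end IsBandProjection

theorem epsBP_band_projection_bound_general {X : Type*} [NormedAddCommGroup X] [Lattice X] [HasSolidNorm X]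
    [IsOrderedAddMonoid X]
    [NormedSpace ℝ X] (ε : ℝ)
    (T : X →ₗ[ℝ] X) (hT : IsEpsBandPreserving ε ⇑T)
    (P : X →ₗ[ℝ] X) (hP : IsBandProjection P) (x : X) (hx : P x = 0) :
    ‖P (T x)‖ ≤ ε * ‖x‖ := by
  set y := P |T x|
  have hy : 0 ≤ y := hP.map_nonneg (abs_nonneg _)
  have hyT : y ≤ |T x| := hP.map_le_self (abs_nonneg _)
  have hdisj : |x| ⊓ y = 0 := hP.abs_inf_eq_zero_of_map_eq_zero hx hy (hP.1 _)
  calc ‖P (T x)‖ ≤ ‖y‖ :=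
        norm_le_norm_of_abs_le_abs (by rw [abs_of_nonneg hy]; exact hP.abs_map_le _)
    _ = ‖|T x| ⊓ y‖ := by rw [inf_eq_right.2 hyT]
    _ ≤ ε * ‖x‖ := hT x y hy hdisj

/-- If `T` is an `ε`-band preserving linear map on a Banach lattice, then for every band
projection `P` and every `x` with `P x = 0`, one has `‖P (T x)‖ ≤ ε * ‖x‖`. -/
theorem epsBP_band_projection_bound {X : Type*} [NormedAddCommGroup X] [Lattice X] [HasSolidNorm X]
    [IsOrderedAddMonoid X]
    [NormedSpace ℝ X] [CompleteSpace X] (ε : ℝ) (hε : 0 ≤ ε)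
    (T : X →ₗ[ℝ] X) (hT : IsEpsBandPreserving ε ⇑T)
    (P : X →ₗ[ℝ] X) (hP : IsBandProjection P) (x : X) (hx : P x = 0) :
    ‖P (T x)‖ ≤ ε * ‖x‖ :=
  epsBP_band_projection_bound_general ε T hT P hP x hx
end

section
/- Let X be a σ-Dedekind complete Banach lattice, ε ≥ 0, and let T : X → X be a bounded linear operator. Then: (1) if for every band projection P on X the commutator satisfies ‖P T − T P‖ ≤ ε, then T is ε-band preserving; (2) if T is ε-band preserving, then for every band projection P on X one has ‖P T − T P‖ ≤ 2ε. -/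
/-- `X` is σ-Dedekind complete: every increasing sequence bounded above has a
least upper bound. -/
def SigmaDedekindComplete (X : Type*) [Lattice X] : Prop :=
  ∀ f : ℕ → X, Monotone f → BddAbove (Set.range f) → ∃ s, IsLUB (Set.range f) s

section LatticeOrderedGroup

variable {G : Type*} [AddCommGroup G] [Lattice G] [IsOrderedAddMonoid G]

lemma add_inf_le_inf_add_inf {a b c : G} (ha : 0 ≤ a) (hb : 0 ≤ b) (hc : 0 ≤ c) :
    (a + b) ⊓ c ≤ a ⊓ c + b ⊓ c := by
  have h : a ⊓ c + b ⊓ c = (a + b) ⊓ (a + c) ⊓ ((c + b) ⊓ (c + c)) := by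
    rw [add_inf, inf_add, inf_add]; ac_rfl
  rw [h]
  exact le_inf (le_inf inf_le_left (inf_le_right.trans (le_add_of_nonneg_left ha)))
    (le_inf (inf_le_right.trans (le_add_of_nonneg_right hb))
      (inf_le_right.trans (le_add_of_nonneg_right hc)))

lemma inf_nsmul_eq_zero {a b : G} (ha : 0 ≤ a) (hb : 0 ≤ b) (hab : a ⊓ b = 0) (n : ℕ) :
    a ⊓ n • b = 0 := by
  induction n with
  | zero => simpa using ha
  | succ n ih =>
    refine le_antisymm ?_ (le_inf ha (nsmul_nonneg hb _))
    calc a ⊓ (n + 1) • b = (n • b + b) ⊓ a := by rw [succ_nsmul, inf_comm]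
      _ ≤ n • b ⊓ a + b ⊓ a := add_inf_le_inf_add_inf (nsmul_nonneg hb n) hb ha
      _ = 0 := by rw [inf_comm, ih, inf_comm, hab, add_zero]

lemma abs_sub_le_add {a b : G} (ha : 0 ≤ a) (hb : 0 ≤ b) : |a - b| ≤ a + b :=
  abs_le'.2 ⟨(sub_le_self a hb).trans (le_add_of_nonneg_right hb),
    (neg_sub a b ▸ sub_le_self b ha).trans (le_add_of_nonneg_left ha)⟩

lemma abs_sub_eq_add_of_inf_eq_zero {a b : G} (hab : a ⊓ b = 0) : |a - b| = a + b := by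
  rw [abs_sub_comm, ← sup_sub_inf_eq_abs_sub, ← inf_add_sup, hab, sub_zero, zero_add]

end LatticeOrderedGroup

section ConeExtension

variable {G H : Type*} [AddCommGroup G] [Lattice G] [IsOrderedAddMonoid G] [AddCommGroup H]
  {q : G → H}

lemma map_posPart_sub_map_negPart_of_sub (hq : ∀ a b, 0 ≤ a → 0 ≤ b → q (a + b) = q a + q b)
    {u v : G} (hu : 0 ≤ u) (hv : 0 ≤ v) : q (u - v)⁺ - q (u - v)⁻ = q u - q v := by
  have hsplit : (u - v)⁺ + v = u + (u - v)⁻ :=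
    sub_eq_sub_iff_add_eq_add.mp (posPart_sub_negPart (u - v))
  have := congrArg q hsplit
  rw [hq _ _ (posPart_nonneg _) hv, hq _ _ hu (negPart_nonneg _)] at this
  rw [sub_eq_sub_iff_add_eq_add, this]

def AddMonoidHom.ofNonnegAdd (q : G → H)
    (hq : ∀ a b, 0 ≤ a → 0 ≤ b → q (a + b) = q a + q b) : G →+ H where
  toFun w := q w⁺ - q w⁻
  map_zero' := by simp
  map_add' a b := by
    have hab : a + b = (a⁺ + b⁺) - (a⁻ + b⁻) := by
      rw [← sub_add_sub_comm, posPart_sub_negPart, posPart_sub_negPart]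
    change q (a + b)⁺ - q (a + b)⁻ = (q a⁺ - q a⁻) + (q b⁺ - q b⁻)
    rw [hab, map_posPart_sub_map_negPart_of_sub hq (add_nonneg (posPart_nonneg a)
      (posPart_nonneg b)) (add_nonneg (negPart_nonneg a) (negPart_nonneg b)),
      hq _ _ (posPart_nonneg a) (posPart_nonneg b), hq _ _ (negPart_nonneg a) (negPart_nonneg b)]
    abel

namespace AddMonoidHom.ofNonnegAdd

variable (hq : ∀ a b, 0 ≤ a → 0 ≤ b → q (a + b) = q a + q b)

lemma apply_sub {u v : G} (hu : 0 ≤ u) (hv : 0 ≤ v) : ofNonnegAdd q hq (u - v) = q u - q v :=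
  map_posPart_sub_map_negPart_of_sub hq hu hv

lemma apply_of_nonneg {u : G} (hu : 0 ≤ u) : ofNonnegAdd q hq u = q u := by
  have hq0 : q 0 = 0 := by simpa using hq 0 0 le_rfl le_rfl
  simpa [hq0] using apply_sub hq hu le_rfl

end AddMonoidHom.ofNonnegAdd

end ConeExtension

section PrincipalBand

open Set

variable {G : Type*} [AddCommGroup G] [Lattice G] {y z s : G}

lemma le_of_isLUB_inf_nsmul (h : IsLUB (range fun n : ℕ => z ⊓ n • y) s) : s ≤ z :=
  h.2 <| by rintro _ ⟨n, rfl⟩; exact inf_le_left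

lemma inf_le_of_isLUB_inf_nsmul (h : IsLUB (range fun n : ℕ => z ⊓ n • y) s) : z ⊓ y ≤ s :=
  h.1 ⟨1, by simp⟩

lemma nonneg_of_isLUB_inf_nsmul (hz : 0 ≤ z) (h : IsLUB (range fun n : ℕ => z ⊓ n • y) s) :
    0 ≤ s :=
  h.1 ⟨0, by simpa using hz⟩

lemma eq_zero_of_isLUB_inf_nsmul [IsOrderedAddMonoid G] (hy : 0 ≤ y) (hz : 0 ≤ z)
    (hzy : z ⊓ y = 0) (h : IsLUB (range fun n : ℕ => z ⊓ n • y) s) : s = 0 := by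
  rw [funext (inf_nsmul_eq_zero hz hy hzy), range_const] at h
  exact h.unique isLUB_singleton

lemma isLUB_inf_nsmul_of_isLUB (h : IsLUB (range fun n : ℕ => z ⊓ n • y) s) :
    IsLUB (range fun n : ℕ => s ⊓ n • y) s := by
  refine ⟨by rintro _ ⟨n, rfl⟩; exact inf_le_left, fun t ht => h.2 ?_⟩
  rintro _ ⟨n, rfl⟩
  exact (le_inf (h.1 ⟨n, rfl⟩) inf_le_right).trans (ht ⟨n, rfl⟩)

lemma isLUB_add_inf_nsmul [IsOrderedAddMonoid G] (hy : 0 ≤ y) {z₁ z₂ s₁ s₂ : G} (hz₁ : 0 ≤ z₁)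
    (hz₂ : 0 ≤ z₂)
    (h₁ : IsLUB (range fun n : ℕ => z₁ ⊓ n • y) s₁)
    (h₂ : IsLUB (range fun n : ℕ => z₂ ⊓ n • y) s₂) :
    IsLUB (range fun n : ℕ => (z₁ + z₂) ⊓ n • y) (s₁ + s₂) := by
  have hsum := h₁.add h₂
  refine ⟨?_, fun t ht => hsum.2 ?_⟩
  · rintro _ ⟨n, rfl⟩
    exact (add_inf_le_inf_add_inf hz₁ hz₂ (nsmul_nonneg hy n)).trans
      (hsum.1 (add_mem_add ⟨n, rfl⟩ ⟨n, rfl⟩))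
  · rintro _ ⟨_, ⟨n, rfl⟩, _, ⟨m, rfl⟩, rfl⟩
    refine le_trans ?_ (ht ⟨n + m, rfl⟩)
    exact le_inf (add_le_add inf_le_left inf_le_left)
      (add_nsmul y n m ▸ add_le_add inf_le_right inf_le_right)

end PrincipalBand

namespace IsBandProjection

variable {X : Type*} [NormedAddCommGroup X] [Lattice X] [HasSolidNorm X] [IsOrderedAddMonoid X]
  [Module ℝ X] {P : X →ₗ[ℝ] X}

lemma compl (hP : IsBandProjection P) : IsBandProjection (LinearMap.id - P) := by
  refine ⟨fun x => ?_, fun x hx => ?_⟩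
  · simp only [LinearMap.sub_apply, LinearMap.id_apply, map_sub, hP.1]
    abel
  · obtain ⟨h₀, h₁⟩ := hP.2 x hx
    simpa using ⟨h₁, h₀⟩

lemma abs_apply_le (hP : IsBandProjection P) (w : X) : |P w| ≤ P |w| := by
  conv_lhs => rw [← posPart_sub_negPart w]
  rw [← posPart_add_negPart w, map_sub, map_add]
  exact abs_sub_le_add (hP.2 _ (posPart_nonneg w)).1 (hP.2 _ (negPart_nonneg w)).1

lemma norm_apply_le (hP : IsBandProjection P) (w : X) : ‖P w‖ ≤ ‖w‖ :=
  norm_le_norm_of_abs_le_abs <| (hP.abs_apply_le w).trans <|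
    (abs_abs w).symm ▸ (hP.2 _ (abs_nonneg w)).2

lemma apply_inf_sub_apply_self (hP : IsBandProjection P) {u : X} (hu : 0 ≤ u) :
    P u ⊓ (u - P u) = 0 := by
  set w := P u ⊓ (u - P u)
  have hPw : P w ≤ 0 := by
    simpa [hP.1] using hP.monotone (inf_le_right : w ≤ u - P u)
  have hQw : w - P w ≤ 0 := by
    simpa [hP.1] using hP.compl.monotone (inf_le_left : w ≤ P u)
  refine le_antisymm ?_ (le_inf (hP.2 u hu).1 (sub_nonneg.mpr (hP.2 u hu).2))
  simpa using add_nonpos hPw hQw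

lemma apply_inf_sub_apply_eq_zero (hP : IsBandProjection P) {u v : X} (hu : 0 ≤ u) (hv : 0 ≤ v) :
    P u ⊓ (v - P v) = 0 := by
  refine le_antisymm ?_ (le_inf (hP.2 u hu).1 (sub_nonneg.mpr (hP.2 v hv).2))
  rw [← hP.apply_inf_sub_apply_self (add_nonneg hu hv)]
  refine inf_le_inf (hP.monotone (le_add_of_nonneg_right hv)) ?_
  simpa using hP.compl.monotone (le_add_of_nonneg_left hu : v ≤ u + v)

lemma abs_sub_apply_le (hP : IsBandProjection P) (w : X) : |w - P w| ≤ |w| - P |w| := by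
  simpa using hP.compl.abs_apply_le w

lemma norm_sub_apply_le (hP : IsBandProjection P) (w : X) : ‖w - P w‖ ≤ ‖w‖ := by
  simpa using hP.compl.norm_apply_le w

end IsBandProjection

section PrincipalBandProjection

variable {X : Type*} [NormedAddCommGroup X] [Lattice X] [HasSolidNorm X] [IsOrderedAddMonoid X]
  [NormedSpace ℝ X]

theorem SigmaDedekindComplete.exists_principalBandProjection (hσ : SigmaDedekindComplete X) {y : X}
    (hy : 0 ≤ y) : ∃ Q : X →ₗ[ℝ] X, IsBandProjection Q ∧
      (∀ x, |x| ⊓ y = 0 → Q x = 0) ∧ ∀ w, |w| ⊓ y ≤ |Q w| := by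
  choose q hq using fun z : X => hσ (fun n : ℕ => z ⊓ n • y)
    (fun _ _ hnm => inf_le_inf_left z (nsmul_le_nsmul_left hy hnm))
    ⟨z, by rintro _ ⟨n, rfl⟩; exact inf_le_left⟩
  have hadd : ∀ a b, 0 ≤ a → 0 ≤ b → q (a + b) = q a + q b := fun a b ha hb =>
    (hq (a + b)).unique (isLUB_add_inf_nsmul hy ha hb (hq a) (hq b))
  have hidem : ∀ z, q (q z) = q z := fun z => (hq (q z)).unique (isLUB_inf_nsmul_of_isLUB (hq z))
  set f := AddMonoidHom.ofNonnegAdd q hadd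
  have hpos : ∀ z, 0 ≤ z → 0 ≤ q z := fun z hz => nonneg_of_isLUB_inf_nsmul hz (hq z)
  have habs : ∀ w, |f w| = q |w| := by
    intro w
    have hdisj : q w⁺ ⊓ q w⁻ = 0 := le_antisymm
      ((inf_le_inf (le_of_isLUB_inf_nsmul (hq _)) (le_of_isLUB_inf_nsmul (hq _))).trans_eq
        (posPart_inf_negPart_eq_zero w))
      (le_inf (hpos _ (posPart_nonneg w)) (hpos _ (negPart_nonneg w)))
    rw [← posPart_add_negPart w, hadd _ _ (posPart_nonneg w) (negPart_nonneg w)]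
    exact abs_sub_eq_add_of_inf_eq_zero hdisj
  have hcont : Continuous f := AddMonoidHomClass.continuous_of_bound f 1 fun w => by
    rw [one_mul]
    exact norm_le_norm_of_abs_le_abs ((habs w).trans_le (le_of_isLUB_inf_nsmul (hq _)))
  refine ⟨f.toRealLinearMap hcont, ⟨fun w => ?_, fun w hw => ?_⟩, fun x hx => ?_, fun w => ?_⟩
  · change f (q w⁺ - q w⁻) = f w
    rw [AddMonoidHom.ofNonnegAdd.apply_sub hadd (hpos _ (posPart_nonneg w))
      (hpos _ (negPart_nonneg w)), hidem, hidem]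
    rfl
  · change 0 ≤ f w ∧ f w ≤ w
    rw [AddMonoidHom.ofNonnegAdd.apply_of_nonneg hadd hw]
    exact ⟨hpos w hw, le_of_isLUB_inf_nsmul (hq w)⟩
  · change f x = 0
    rw [← norm_eq_zero, ← norm_abs_eq_norm, habs,
      eq_zero_of_isLUB_inf_nsmul hy (abs_nonneg x) hx (hq _), norm_zero]
  · change |w| ⊓ y ≤ |f w|
    rw [habs]
    exact inf_le_of_isLUB_inf_nsmul (hq _)

end PrincipalBandProjection

namespace IsEpsBandPreserving

variable {X : Type*} [NormedAddCommGroup X] [Lattice X] [HasSolidNorm X] [IsOrderedAddMonoid X]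
  [Module ℝ X] {ε : ℝ} {P : X →ₗ[ℝ] X}

lemma norm_proj_apply_compl_le (hε : 0 ≤ ε) {T : X → X} (hT : IsEpsBandPreserving ε T)
    (hP : IsBandProjection P) (x : X) : ‖P (T (x - P x))‖ ≤ ε * ‖x‖ := by
  set z := x - P x
  have hy : 0 ≤ P |T z| := (hP.2 _ (abs_nonneg _)).1
  -- `|z|` lies in the complementary band of `P`, `P |T z|` in the band of `P`
  have hdisj : |z| ⊓ P |T z| = 0 := by
    refine le_antisymm ?_ (le_inf (abs_nonneg z) hy)
    calc |z| ⊓ P |T z| ≤ (|x| - P |x|) ⊓ P |T z| := inf_le_inf_right _ (hP.abs_sub_apply_le x)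
      _ = 0 := by rw [inf_comm]; exact hP.apply_inf_sub_apply_eq_zero (abs_nonneg _) (abs_nonneg _)
  calc ‖P (T z)‖ ≤ ‖P |T z|‖ :=
        norm_le_norm_of_abs_le_abs (by rw [abs_of_nonneg hy]; exact hP.abs_apply_le _)
    _ = ‖|T z| ⊓ P |T z|‖ := by rw [inf_eq_right.2 (hP.2 _ (abs_nonneg _)).2]
    _ ≤ ε * ‖z‖ := hT z _ hy hdisj
    _ ≤ ε * ‖x‖ := mul_le_mul_of_nonneg_left (hP.norm_sub_apply_le x) hε

lemma norm_commutator_le (hε : 0 ≤ ε) {F : Type*} [FunLike F X X] [AddMonoidHomClass F X X]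
    {T : F} (hT : IsEpsBandPreserving ε T) (hP : IsBandProjection P) (x : X) :
    ‖P (T x) - T (P x)‖ ≤ 2 * ε * ‖x‖ := by
  have hsplit : P (T x) - T (P x) = P (T (x - P x)) - (T (P x) - P (T (P x))) := by
    rw [map_sub T, map_sub P]; abel
  have hcompl : ‖T (P x) - P (T (P x))‖ ≤ ε * ‖x‖ := by
    simpa using hT.norm_proj_apply_compl_le hε hP.compl x
  calc ‖P (T x) - T (P x)‖ ≤ ‖P (T (x - P x))‖ + ‖T (P x) - P (T (P x))‖ :=
        hsplit ▸ norm_sub_le _ _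
    _ ≤ ε * ‖x‖ + ε * ‖x‖ := add_le_add (hT.norm_proj_apply_compl_le hε hP x) hcompl
    _ = 2 * ε * ‖x‖ := by ring

end IsEpsBandPreserving

lemma isEpsBandPreserving_of_norm_commutator_le {X : Type*} [NormedAddCommGroup X] [Lattice X]
    [HasSolidNorm X] [IsOrderedAddMonoid X] [NormedSpace ℝ X] (hσ : SigmaDedekindComplete X)
    {ε : ℝ} {T : X → X}
    (hT : ∀ P : X →ₗ[ℝ] X, IsBandProjection P → ∀ x : X, ‖P (T x) - T (P x)‖ ≤ ε * ‖x‖) :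
    IsEpsBandPreserving ε T := by
  intro x y hy hxy
  obtain ⟨Q, hQ, hQx, hQw⟩ := hσ.exists_principalBandProjection hy
  -- the commutator of `T` with the complementary projection `id - Q` at `x` is `-Q (T x)`
  have hcomm := hT _ hQ.compl x
  simp only [LinearMap.sub_apply, LinearMap.id_apply, hQx x hxy, sub_zero, sub_sub_cancel_left,
    norm_neg] at hcomm
  refine le_trans (norm_le_norm_of_abs_le_abs ?_) hcomm
  rw [abs_of_nonneg (le_inf (abs_nonneg _) hy)]
  exact hQw _

theorem epsBP_commutator_general {X : Type*} [NormedAddCommGroup X] [Lattice X] [HasSolidNorm X]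
    [IsOrderedAddMonoid X]
    [NormedSpace ℝ X] (hσ : SigmaDedekindComplete X)
    (ε : ℝ) (hε : 0 ≤ ε) (T : X →L[ℝ] X) :
    ((∀ P : X →ₗ[ℝ] X, IsBandProjection P → ∀ x : X, ‖P (T x) - T (P x)‖ ≤ ε * ‖x‖) →
      IsEpsBandPreserving ε ⇑T) ∧
    (IsEpsBandPreserving ε ⇑T →
      ∀ P : X →ₗ[ℝ] X, IsBandProjection P → ∀ x : X, ‖P (T x) - T (P x)‖ ≤ 2 * ε * ‖x‖) :=
  ⟨isEpsBandPreserving_of_norm_commutator_le hσ, fun hT _ hP => hT.norm_commutator_le hε hP⟩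

/-- On a σ-Dedekind complete Banach lattice: (1) if every band projection `P` satisfies
`‖P T − T P‖ ≤ ε`, then `T` is `ε`-band preserving; (2) if `T` is `ε`-band preserving, then
every band projection `P` satisfies `‖P T − T P‖ ≤ 2 ε`. -/
theorem epsBP_commutator {X : Type*} [NormedAddCommGroup X] [Lattice X] [HasSolidNorm X]
    [IsOrderedAddMonoid X]
    [NormedSpace ℝ X] [CompleteSpace X] (hσ : SigmaDedekindComplete X)
    (ε : ℝ) (hε : 0 ≤ ε) (T : X →L[ℝ] X) :
    ((∀ P : X →ₗ[ℝ] X, IsBandProjection P → ∀ x : X, ‖P (T x) - T (P x)‖ ≤ ε * ‖x‖) →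
      IsEpsBandPreserving ε ⇑T) ∧
    (IsEpsBandPreserving ε ⇑T →
      ∀ P : X →ₗ[ℝ] X, IsBandProjection P → ∀ x : X, ‖P (T x) - T (P x)‖ ≤ 2 * ε * ‖x‖) :=
  epsBP_commutator_general hσ ε hε T
end

section
/- Let X be a Banach lattice, ε ≥ 0, and let T : X → X be a linear map with the following property: for every x ∈ X with ‖x‖ ≤ 1 and every ε' > ε, there exist λ > 0 and z ∈ X with ‖z‖ ≤ ε' such that |T x| ≤ λ·|x| + z. Then T is ε-band preserving. -/
/-!
The positive cone of a normed lattice is closed and, being closed under halving, contains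
every dyadic multiple of a positive element; hence real scalar multiplication is monotone and
`v ↦ c • v` (`c > 0`) is a lattice automorphism. Normalising `x` to the unit ball, the
hypothesis then gives `|T x| ≤ λ|x| + ‖x‖ • |z|`. Since `λ|x|` is disjoint from `y`, meeting
with `y` leaves `|T x| ⊓ y ≤ ‖x‖ • |z|`, of norm at most `ε' ‖x‖`; now let `ε' ↓ ε`.
-/

open Filter Topology

section LatticeOrderedModule

variable {X : Type*} [AddCommGroup X] [Lattice X] [IsOrderedAddMonoid X]

lemma inf_le_of_inf_eq_zero {a w y : X} (hw : 0 ≤ w) (hay : a ⊓ y = 0) : (a + w) ⊓ y ≤ w :=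
  calc (a + w) ⊓ y ≤ (a + w) ⊓ (y + w) := inf_le_inf_left _ (le_add_of_nonneg_right hw)
    _ = w := by rw [← inf_add, hay, zero_add]

variable [Module ℝ X]

lemma inv_two_pow_smul_nonneg (n : ℕ) {a : X} (ha : 0 ≤ a) : 0 ≤ ((2 : ℝ) ^ n)⁻¹ • a := by
  induction n with
  | zero => simpa using ha
  | succ n ih =>
    refine nsmul_two_semiclosed ?_
    rwa [two_nsmul, ← add_smul, pow_succ, mul_inv, ← mul_two, mul_assoc,
      inv_mul_cancel₀ two_ne_zero, mul_one]

variable [PosSMulMono ℝ X]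

lemma abs_smul_of_nonneg {c : ℝ} (hc : 0 ≤ c) (v : X) : |c • v| = c • |v| := by
  rcases hc.eq_or_lt with rfl | hc
  · simp
  · change c • v ⊔ -(c • v) = c • (v ⊔ -v)
    rw [← smul_neg]
    exact ((OrderIso.smulRight hc).map_sup v (-v)).symm

lemma smul_inf_eq_zero {r : ℝ} (hr : 0 ≤ r) {a y : X} (ha : 0 ≤ a) (hy : 0 ≤ y)
    (hay : a ⊓ y = 0) : (r • a) ⊓ y = 0 := by
  have hm : 0 < max r 1 := lt_max_of_lt_right one_pos
  refine le_antisymm ?_ (le_inf (smul_nonneg hr ha) hy)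
  calc (r • a) ⊓ y ≤ (max r 1 • a) ⊓ (max r 1 • y) :=
        inf_le_inf (smul_le_smul_of_nonneg_right (le_max_left r 1) ha)
          (le_smul_of_one_le_left hy (le_max_right r 1))
    _ = max r 1 • (a ⊓ y) := ((OrderIso.smulRight hm).map_inf a y).symm
    _ = 0 := by rw [hay, smul_zero]

lemma LinearMap.abs_map_smul_le {c lam : ℝ} (hc : 0 ≤ c) (T : X →ₗ[ℝ] X) {u z : X}
    (h : |T u| ≤ lam • |u| + z) : |T (c • u)| ≤ lam • |c • u| + c • |z| := by
  rw [T.map_smul, abs_smul_of_nonneg hc, abs_smul_of_nonneg hc]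
  calc c • |T u| ≤ c • (lam • |u| + z) := smul_le_smul_of_nonneg_left h hc
    _ = lam • (c • |u|) + c • z := by rw [smul_add, smul_comm]
    _ ≤ lam • (c • |u|) + c • |z| :=
        add_le_add_right (smul_le_smul_of_nonneg_left (le_abs_self z) hc) _

end LatticeOrderedModule

section NormedLattice

variable {X : Type*} [NormedAddCommGroup X] [Lattice X] [HasSolidNorm X] [IsOrderedAddMonoid X]

lemma norm_le_norm_of_nonneg_of_le {a b : X} (ha : 0 ≤ a) (hab : a ≤ b) : ‖a‖ ≤ ‖b‖ :=
  norm_le_norm_of_abs_le_abs (by rwa [abs_of_nonneg ha, abs_of_nonneg (ha.trans hab)])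

variable [NormedSpace ℝ X]

instance HasSolidNorm.toPosSMulMono : PosSMulMono ℝ X :=
  PosSMulMono.of_smul_nonneg fun r hr a ha => by
    have hlim : Tendsto (fun n : ℕ => ((⌊r * 2 ^ n⌋₊ : ℝ) / 2 ^ n) • a) atTop (𝓝 (r • a)) :=
      ((tendsto_nat_floor_mul_div_atTop hr).comp
        (tendsto_pow_atTop_atTop_of_one_lt one_lt_two)).smul_const a
    refine isClosed_nonneg.mem_of_tendsto hlim (Eventually.of_forall fun n => ?_)
    rw [Set.mem_ofPred_eq, div_eq_mul_inv, mul_smul, Nat.cast_smul_eq_nsmul]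
    exact nsmul_nonneg (inv_two_pow_smul_nonneg n ha) _

end NormedLattice

theorem epsBP_of_domination_general {X : Type*} [NormedAddCommGroup X] [Lattice X]
    [HasSolidNorm X] [IsOrderedAddMonoid X]
    [NormedSpace ℝ X] (ε : ℝ) (T : X →ₗ[ℝ] X)
    (h : ∀ x : X, ‖x‖ ≤ 1 → ∀ ε' : ℝ, ε < ε' →
      ∃ lam : ℝ, 0 < lam ∧ ∃ z : X, ‖z‖ ≤ ε' ∧ |T x| ≤ lam • |x| + z) :
    IsEpsBandPreserving ε ⇑T := by
  intro x y hy hxy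
  rcases eq_or_ne x 0 with rfl | hx
  · simp [inf_eq_left.2 hy]
  have hx' : ‖x‖ ≠ 0 := norm_ne_zero_iff.2 hx
  have key : ∀ ε' > ε, ‖|T x| ⊓ y‖ ≤ ε' * ‖x‖ := by
    intro ε' hε'
    obtain ⟨lam, hlam, z, hz, hdom⟩ :=
      h (‖x‖⁻¹ • x) (norm_smul_inv_norm (𝕜 := ℝ) hx).le ε' hε'
    have hTx := T.abs_map_smul_le (norm_nonneg x) hdom
    rw [smul_inv_smul₀ hx'] at hTx
    have hw : 0 ≤ ‖x‖ • |z| := smul_nonneg (norm_nonneg x) (abs_nonneg z)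
    calc ‖|T x| ⊓ y‖ ≤ ‖‖x‖ • |z|‖ :=
          norm_le_norm_of_nonneg_of_le (le_inf (abs_nonneg _) hy)
            ((inf_le_inf_right y hTx).trans (inf_le_of_inf_eq_zero hw
              (smul_inf_eq_zero hlam.le (abs_nonneg x) hy hxy)))
      _ = ‖x‖ * ‖z‖ := by rw [norm_smul, norm_norm, norm_abs_eq_norm]
      _ ≤ ε' * ‖x‖ := by rw [mul_comm]; gcongr
  have hlim : Tendsto (fun ε' => ε' * ‖x‖) (𝓝[>] ε) (𝓝 (ε * ‖x‖)) :=
    ((continuous_mul_const ‖x‖).tendsto ε).mono_left nhdsWithin_le_nhds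
  exact ge_of_tendsto hlim (eventually_nhdsWithin_of_forall key)

/-- If a linear map `T` on a Banach lattice satisfies: for every `x` in the unit ball and
every `ε' > ε` there exist `λ > 0` and `z` with `‖z‖ ≤ ε'` such that `|T x| ≤ λ|x| + z`,
then `T` is `ε`-band preserving. -/
theorem epsBP_of_domination {X : Type*} [NormedAddCommGroup X] [Lattice X]
    [HasSolidNorm X] [IsOrderedAddMonoid X]
    [NormedSpace ℝ X] [CompleteSpace X] (ε : ℝ) (hε : 0 ≤ ε) (T : X →ₗ[ℝ] X)
    (h : ∀ x : X, ‖x‖ ≤ 1 → ∀ ε' : ℝ, ε < ε' →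
      ∃ lam : ℝ, 0 < lam ∧ ∃ z : X, ‖z‖ ≤ ε' ∧ |T x| ≤ lam • |x| + z) :
    IsEpsBandPreserving ε ⇑T :=
  epsBP_of_domination_general ε T h
end

section
/- Let X be a σ-Dedekind complete Banach lattice, ε ≥ 0, and let T : X → X be a linear map (not assumed continuous) that is ε-band preserving. Then T is 3ε-disjointness preserving; that is, for all x, y ∈ X with ‖x‖ ≤ 1, ‖y‖ ≤ 1 and |x| ⊓ |y| = 0, one has ‖|T x| ⊓ |T y|‖ ≤ 3ε. -/
/-!
Split `|T x| = b + d`, where `b = sup_n (|T x| ⊓ n • |y|)` lies in the band generated by `|y|`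
(this is where σ-Dedekind completeness enters) and `d ⊥ |y|`; likewise `|T y| = b' + d'` with
`b'` in the band of `|x|` and `d' ⊥ |x|`. Since `|x| ⊥ |y|`, also `b ⊥ b'`, hence
`|T x| ⊓ |T y| ≤ |T x| ⊓ d' + d ⊓ |T y|`, and band preservation bounds the norm of each term by
`ε`. This even gives the bound `2ε`.
-/

section LatticeOrderedGroup

variable {α : Type*} [AddCommGroup α] [Lattice α] [IsOrderedAddMonoid α]

lemma add_inf_le_add_inf {u v w : α} (hu : 0 ≤ u) : (u + v) ⊓ w ≤ u + v ⊓ w :=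
  calc (u + v) ⊓ w ≤ (u + v) ⊓ (u + w) := inf_le_inf_left _ (le_add_of_nonneg_left hu)
    _ = u + v ⊓ w := (add_inf v w u).symm

lemma add_inf_le_inf_add_inf_s7 {u v w : α} (hu : 0 ≤ u) (hv : 0 ≤ v) (hw : 0 ≤ w) :
    (u + v) ⊓ w ≤ u ⊓ w + v ⊓ w :=
  calc (u + v) ⊓ w ≤ (u + v ⊓ w) ⊓ (w + v ⊓ w) :=
        le_inf (add_inf_le_add_inf hu) (le_add_of_le_of_nonneg inf_le_right (le_inf hv hw))
    _ = u ⊓ w + v ⊓ w := by rw [← inf_add]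

lemma nsmul_inf_eq_zero {u w : α} (hu : 0 ≤ u) (hw : 0 ≤ w) (h : u ⊓ w = 0) (n : ℕ) :
    (n • u) ⊓ w = 0 := by
  induction n with
  | zero => simpa using hw
  | succ k ih =>
    refine le_antisymm ?_ (le_inf (nsmul_nonneg hu _) hw)
    calc ((k + 1) • u) ⊓ w ≤ (k • u) ⊓ w + u ⊓ w :=
          succ_nsmul u k ▸ add_inf_le_inf_add_inf_s7 (nsmul_nonneg hu k) hu hw
      _ = 0 := by rw [ih, h, add_zero]

lemma inf_eq_zero_of_isLUB {a : ℕ → α} {b w : α} (hb : IsLUB (Set.range a) b) (hb0 : 0 ≤ b)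
    (hw : 0 ≤ w) (h : ∀ n, a n ⊓ w = 0) : b ⊓ w = 0 := by
  have hab : ∀ n, a n ≤ b := fun n => hb.1 (Set.mem_range_self n)
  have hub : b ≤ b - b ⊓ w := hb.2 <| by
    rintro _ ⟨n, rfl⟩
    have := add_inf_le_add_inf (v := a n) (w := w) (sub_nonneg.2 (hab n))
    rw [sub_add_cancel, h n, add_zero] at this
    exact le_sub_comm.1 this
  exact le_antisymm (by simpa using hub) (le_inf hb0 hw)

lemma sub_inf_eq_zero_of_isLUB_inf_nsmul {z e b : α} (he : 0 ≤ e)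
    (hb : IsLUB (Set.range fun n : ℕ => z ⊓ n • e) b) : (z - b) ⊓ e = 0 := by
  have hbz : b ≤ z := hb.2 <| by rintro _ ⟨n, rfl⟩; exact inf_le_left
  set c := (z - b) ⊓ e
  -- `c + z ⊓ n • e ≤ z ⊓ (n + 1) • e ≤ b` for every `n`, so `b ≤ b - c`.
  have hub : b ≤ b - c := hb.2 <| by
    rintro _ ⟨n, rfl⟩
    have hz : c + z ⊓ n • e ≤ z :=
      (add_le_add inf_le_left (hb.1 (Set.mem_range_self n))).trans (sub_add_cancel z b).le
    have hne : c + z ⊓ n • e ≤ (n + 1) • e := by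
      rw [succ_nsmul, add_comm _ e]
      exact add_le_add inf_le_right inf_le_right
    exact le_sub_iff_add_le'.2 ((le_inf hz hne).trans (hb.1 (Set.mem_range_self (n + 1))))
  exact le_antisymm (by simpa using hub) (le_inf (sub_nonneg.2 hbz) he)

lemma SigmaDedekindComplete.exists_band_component (hσ : SigmaDedekindComplete α) {z e : α}
    (hz : 0 ≤ z) (he : 0 ≤ e) :
    ∃ b : α, 0 ≤ b ∧ b ≤ z ∧ (z - b) ⊓ e = 0 ∧ ∀ w, 0 ≤ w → e ⊓ w = 0 → b ⊓ w = 0 := by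
  obtain ⟨b, hb⟩ := hσ (fun n : ℕ => z ⊓ n • e)
    (fun n m hnm => inf_le_inf_left _ (nsmul_le_nsmul_left he hnm))
    ⟨z, by rintro _ ⟨n, rfl⟩; exact inf_le_left⟩
  have hb0 : 0 ≤ b := by simpa [hz] using hb.1 (Set.mem_range_self 0)
  refine ⟨b, hb0, hb.2 ?_, sub_inf_eq_zero_of_isLUB_inf_nsmul he hb, ?_⟩
  · rintro _ ⟨n, rfl⟩; exact inf_le_left
  · intro w hw hew
    refine inf_eq_zero_of_isLUB hb hb0 hw fun n => le_antisymm ?_ (le_inf (le_inf hz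
      (nsmul_nonneg he n)) hw)
    calc (z ⊓ n • e) ⊓ w ≤ (n • e) ⊓ w := inf_le_inf_right _ inf_le_right
      _ = 0 := nsmul_inf_eq_zero he hw hew n

lemma inf_le_inf_sub_add_sub_inf {u v b b' : α} (hb : 0 ≤ b) (hbu : b ≤ u) (hb' : 0 ≤ b')
    (hb'v : b' ≤ v) (hbb' : b ⊓ b' = 0) : u ⊓ v ≤ u ⊓ (v - b') + (u - b) ⊓ v := by
  have hv : 0 ≤ v := hb'.trans hb'v
  have hbv : b ⊓ v ≤ u ⊓ (v - b') :=
    calc b ⊓ v = (b' + (v - b')) ⊓ b := by rw [add_sub_cancel, inf_comm]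
      _ ≤ b' ⊓ b + (v - b') ⊓ b := add_inf_le_inf_add_inf_s7 hb' (sub_nonneg.2 hb'v) hb
      _ ≤ u ⊓ (v - b') := by rw [inf_comm, hbb', zero_add, inf_comm]; exact inf_le_inf_right _ hbu
  calc u ⊓ v = (b + (u - b)) ⊓ v := by rw [add_sub_cancel]
    _ ≤ b ⊓ v + (u - b) ⊓ v := add_inf_le_inf_add_inf_s7 hb (sub_nonneg.2 hbu) hv
    _ ≤ u ⊓ (v - b') + (u - b) ⊓ v := add_le_add_left hbv _

end LatticeOrderedGroup

lemma norm_le_norm_of_nonneg_of_le_s7 {α : Type*} [NormedAddCommGroup α] [Lattice α]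
    [HasSolidNorm α] [IsOrderedAddMonoid α] {a b : α} (ha : 0 ≤ a) (hab : a ≤ b) : ‖a‖ ≤ ‖b‖ :=
  norm_le_norm_of_abs_le_abs <| by rwa [abs_of_nonneg ha, abs_of_nonneg (ha.trans hab)]

lemma IsEpsBandPreserving.norm_abs_inf_le {X : Type*} [NormedAddCommGroup X] [Lattice X]
    {ε : ℝ} {T : X → X} (hT : IsEpsBandPreserving ε T) (hε : 0 ≤ ε) {x w : X} (hx : ‖x‖ ≤ 1)
    (hw : 0 ≤ w) (hxw : |x| ⊓ w = 0) : ‖|T x| ⊓ w‖ ≤ ε :=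
  (hT x w hw hxw).trans (mul_le_of_le_one_right hε hx)

theorem epsBP_implies_three_eps_DP_general {X : Type*} [NormedAddCommGroup X] [Lattice X]
    [HasSolidNorm X] [IsOrderedAddMonoid X]
    [NormedSpace ℝ X] (hσ : SigmaDedekindComplete X)
    (ε : ℝ) (hε : 0 ≤ ε) (T : X →ₗ[ℝ] X) (hT : IsEpsBandPreserving ε ⇑T) :
    ∀ x y : X, ‖x‖ ≤ 1 → ‖y‖ ≤ 1 → |x| ⊓ |y| = 0 → ‖|T x| ⊓ |T y|‖ ≤ 3 * ε := by
  intro x y hx hy hxy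
  obtain ⟨b, hb0, hbTx, hTxb, hb⟩ := hσ.exists_band_component (abs_nonneg (T x)) (abs_nonneg y)
  obtain ⟨b', hb'0, hb'Ty, hTyb', hb'⟩ :=
    hσ.exists_band_component (abs_nonneg (T y)) (abs_nonneg x)
  have hb'y : b' ⊓ |y| = 0 := hb' _ (abs_nonneg y) hxy
  have hbb' : b ⊓ b' = 0 := hb _ hb'0 (by rw [inf_comm, hb'y])
  calc ‖|T x| ⊓ |T y|‖ ≤ ‖|T x| ⊓ (|T y| - b') + (|T x| - b) ⊓ |T y|‖ :=
        norm_le_norm_of_nonneg_of_le_s7 (le_inf (abs_nonneg _) (abs_nonneg _))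
          (inf_le_inf_sub_add_sub_inf hb0 hbTx hb'0 hb'Ty hbb')
    _ ≤ ‖|T x| ⊓ (|T y| - b')‖ + ‖|T y| ⊓ (|T x| - b)‖ := by
        rw [inf_comm (|T x| - b)]; exact norm_add_le _ _
    _ ≤ ε + ε := add_le_add
        (hT.norm_abs_inf_le hε hx (sub_nonneg.2 hb'Ty) (by rwa [inf_comm]))
        (hT.norm_abs_inf_le hε hy (sub_nonneg.2 hbTx) (by rwa [inf_comm]))
    _ ≤ 3 * ε := by linarith

/-- On a σ-Dedekind complete Banach lattice, any `ε`-band preserving linear map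
(not assumed continuous) is `3ε`-disjointness preserving. -/
theorem epsBP_implies_three_eps_DP {X : Type*} [NormedAddCommGroup X] [Lattice X]
    [HasSolidNorm X] [IsOrderedAddMonoid X]
    [NormedSpace ℝ X] [CompleteSpace X] (hσ : SigmaDedekindComplete X)
    (ε : ℝ) (hε : 0 ≤ ε) (T : X →ₗ[ℝ] X) (hT : IsEpsBandPreserving ε ⇑T) :
    ∀ x y : X, ‖x‖ ≤ 1 → ‖y‖ ≤ 1 → |x| ⊓ |y| = 0 → ‖|T x| ⊓ |T y|‖ ≤ 3 * ε :=
  epsBP_implies_three_eps_DP_general hσ ε hε T hT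
end

section
/- Let K be a locally compact Hausdorff topological space and let (s_n)_{n ∈ ℕ} be a sequence of pairwise distinct points of K. Then there exist a strictly increasing sequence of indices n_1 < n_2 < n_3 < ⋯ and a family (U_k)_{k ∈ ℕ} of pairwise disjoint open subsets of K such that s_{n_k} ∈ U_k for every k. -/
/-!
Build the subsequence greedily: each new point `s n` gets an open set that avoids the closures
of the finitely many sets chosen before, and an invariant keeps this possible forever. If `s`
has a cluster point `x`, the invariant is `x ∉ closure U`: infinitely many `s n` lie near `x`,
and one of them other than `x` can be separated from `x`. Otherwise every point has a
neighbourhood met by only finitely many `s n`; the invariant is that `closure U` contains only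
finitely many `s n`, and regularity shrinks such a neighbourhood of a fresh `s n` to one whose
closure stays inside it and away from the earlier sets.
-/

open Filter Function Set Topology

section

variable {X : Type*} [TopologicalSpace X]

def HasSeparatedSubseq (s : ℕ → X) : Prop :=
  ∃ n : ℕ → ℕ, StrictMono n ∧ ∃ U : ℕ → Set X, (∀ k, IsOpen (U k)) ∧
    (Pairwise fun i j => Disjoint (U i) (U j)) ∧ ∀ k, s (n k) ∈ U k

theorem hasSeparatedSubseq_of_forall_finset_exists {s : ℕ → X} (P : Set X → Prop)
    (h : ∀ (N : ℕ) (F : Finset (Set X)), (∀ U ∈ F, P U) →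
      ∃ n > N, ∃ V, IsOpen V ∧ s n ∈ V ∧ P V ∧ ∀ U ∈ F, Disjoint U V) :
    HasSeparatedSubseq s := by
  classical
  obtain ⟨f, hfP, hfr⟩ := exists_seq_of_forall_finset_exists
    (fun a : ℕ × Set X => IsOpen a.2 ∧ s a.1 ∈ a.2 ∧ P a.2)
    (fun a b => a.1 < b.1 ∧ Disjoint a.2 b.2) fun S hS => by
      obtain ⟨n, hn, V, hVo, hnV, hPV, hdisj⟩ :=
        h (S.sup Prod.fst) (S.image Prod.snd) (by simpa using fun U n hn => (hS (n, U) hn).2.2)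
      exact ⟨(n, V), ⟨hVo, hnV, hPV⟩, fun a ha =>
        ⟨(Finset.le_sup ha).trans_lt hn, hdisj _ (Finset.mem_image_of_mem _ ha)⟩⟩
  refine ⟨fun k => (f k).1, fun i j hij => (hfr i j hij).1, fun k => (f k).2,
    fun k => (hfP k).1, fun i j hij => ?_, fun k => (hfP k).2.1⟩
  rcases hij.lt_or_gt with hij | hij
  · exact (hfr i j hij).2
  · exact (hfr j i hij).2.symm

theorem hasSeparatedSubseq_of_mapClusterPt [T2Space X] {s : ℕ → X} (hs : Injective s) {x : X}
    (hx : MapClusterPt x atTop s) : HasSeparatedSubseq s := by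
  refine hasSeparatedSubseq_of_forall_finset_exists (fun U => x ∉ closure U) fun N F hF => ?_
  set G := ⋂ U ∈ F, (closure U)ᶜ
  have hGo : IsOpen G := isOpen_biInter_finset fun U _ => isClosed_closure.isOpen_compl
  have hG : G ∈ 𝓝 x := hGo.mem_nhds (mem_iInter₂.2 hF)
  have hne : ∀ᶠ n in atTop, N < n ∧ s n ≠ x :=
    (eventually_gt_atTop N).and <| Nat.cofinite_eq_atTop ▸
      hs.tendsto_cofinite.eventually (eventually_cofinite_ne x)
  obtain ⟨n, hnG, hnN, hnx⟩ :=
    ((mapClusterPt_iff_frequently.1 hx G hG).and_eventually hne).exists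
  obtain ⟨V, W, hVo, hWo, hnV, hxW, hVW⟩ := t2_separation hnx
  refine ⟨n, hnN, V ∩ G, hVo.inter hGo, ⟨hnV, hnG⟩, fun hx => ?_, fun U hU => ?_⟩
  · exact ((hVW.mono_left inter_subset_left).closure_left hWo).notMem_of_mem_left hx hxW
  · exact disjoint_right.2 fun y hy hyU =>
      mem_iInter₂.1 hy.2 U hU (subset_closure hyU)

theorem hasSeparatedSubseq_of_forall_not_mapClusterPt [RegularSpace X] {s : ℕ → X}
    (hs : ∀ x, ¬MapClusterPt x atTop s) : HasSeparatedSubseq s := by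
  refine hasSeparatedSubseq_of_forall_finset_exists
    (fun U => {n | s n ∈ closure U}.Finite) fun N F hF => ?_
  have hbad : (Iic N ∪ ⋃ U ∈ F, {n | s n ∈ closure U}).Finite :=
    (finite_Iic N).union (F.finite_toSet.biUnion hF)
  obtain ⟨n, hn⟩ := hbad.exists_notMem
  simp only [mem_union, mem_Iic, mem_iUnion, mem_ofPred_eq, not_or, not_le, not_exists] at hn
  set G := ⋂ U ∈ F, (closure U)ᶜ
  have hG : G ∈ 𝓝 (s n) :=
    (isOpen_biInter_finset fun U _ => isClosed_closure.isOpen_compl).mem_nhds (mem_iInter₂.2 hn.2)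
  obtain ⟨N', hN', hN'fin⟩ : ∃ N' ∈ 𝓝 (s n), {m | s m ∈ N'}.Finite := by
    simpa [mapClusterPt_iff_frequently, ← Nat.cofinite_eq_atTop, eventually_cofinite]
      using hs (s n)
  obtain ⟨D, hD, hDc, hDsub⟩ := exists_mem_nhds_isClosed_subset (inter_mem hG hN')
  have hclosure : closure (interior D) ⊆ D := closure_minimal interior_subset hDc
  refine ⟨n, hn.1, interior D, isOpen_interior, mem_interior_iff_mem_nhds.2 hD,
    hN'fin.subset fun m hm => (hDsub (hclosure hm)).2, fun U hU => ?_⟩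
  exact disjoint_right.2 fun y hy hyU =>
    mem_iInter₂.1 (hDsub (interior_subset hy)).1 U hU (subset_closure hyU)

end

/-- Given a sequence of distinct points in a locally compact Hausdorff space, there is a
subsequence together with pairwise disjoint open sets, each containing the corresponding
point of the subsequence. -/
theorem exists_disjoint_opens_of_injective_seq {K : Type*} [TopologicalSpace K]
    [T2Space K] [LocallyCompactSpace K] (s : ℕ → K) (hs : Function.Injective s) :
    ∃ n : ℕ → ℕ, StrictMono n ∧ ∃ U : ℕ → Set K, (∀ k, IsOpen (U k)) ∧
      (Pairwise fun i j => Disjoint (U i) (U j)) ∧ ∀ k, s (n k) ∈ U k := by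
  by_cases h : ∃ x, MapClusterPt x atTop s
  · obtain ⟨x, hx⟩ := h
    exact hasSeparatedSubseq_of_mapClusterPt hs hx
  · exact hasSeparatedSubseq_of_forall_not_mapClusterPt (not_exists.1 h)
end

section
/- Let K be a compact Hausdorff space, let C(K) denote the Banach lattice of continuous real-valued functions on K with supremum norm and pointwise order, and let ε ≥ 0. Then every ε-band preserving linear map T : C(K) → C(K) is continuous (bounded). -/
/-!
Call `T` bounded near `t` if it is bounded on the functions supported in some neighbourhood
of `t`. If this holds at every point, a finite partition of unity subordinate to these
neighbourhoods cuts every `x` into pieces on which `T` is bounded, so `T` is bounded.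

A point `t₀` near which `T` is unbounded is not isolated, and a gliding hump rules it out:
choose humps `xₙ` with `‖xₙ‖ ≤ 2⁻ⁿ`, supported in shrinking closed neighbourhoods `Vₙ` of `t₀`,
and points `tₙ ∉ Vₙ₊₁` at which `|T xₙ|` exceeds `n + 2|ε|` plus the norm of `T` of the
earlier humps. The tail `∑_{m>n} xₘ` vanishes near `tₙ`, so `ε`-band preservation bounds `T` of
it by `2|ε|` at `tₙ`; hence `|T (∑ xₘ) (tₙ)| > n` for every `n`.
-/

open Set Filter Topology

theorem tsupport_tsum_subset {X ι : Type*} [TopologicalSpace X] {f : ι → C(X, ℝ)}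
    (hf : Summable f) {F : Set X} (hF : IsClosed F) (h : ∀ i, tsupport (f i) ⊆ F) :
    tsupport ⇑(∑' i, f i) ⊆ F := by
  refine closure_minimal (fun s hs => ?_) hF
  by_contra hsF
  apply hs
  rw [← ContinuousMap.tsum_apply hf]
  exact (tsum_congr fun i => image_eq_zero_of_notMem_tsupport fun hi => hsF (h i hi)).trans
    tsum_zero

section

variable {K E : Type*} [TopologicalSpace K] [CompactSpace K]

def IsBoundedNear [Norm E] (T : C(K, ℝ) → E) (t : K) : Prop :=
  ∃ U ∈ 𝓝 t, ∃ C : ℝ, ∀ x : C(K, ℝ), tsupport x ⊆ U → ‖T x‖ ≤ C * ‖x‖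

theorem exists_small_with_large_image_of_not_isBoundedNear [NormedAddCommGroup E]
    [NormedSpace ℝ E] {T : C(K, ℝ) →ₗ[ℝ] E} {t : K} (hT : ¬IsBoundedNear T t) {U : Set K}
    (hU : U ∈ 𝓝 t) {δ : ℝ} (hδ : 0 < δ) (A : ℝ) :
    ∃ x : C(K, ℝ), tsupport x ⊆ U ∧ ‖x‖ ≤ δ ∧ A < ‖T x‖ := by
  obtain ⟨z, hzU, hz⟩ : ∃ z : C(K, ℝ), tsupport z ⊆ U ∧ A / δ * ‖z‖ < ‖T z‖ := by
    unfold IsBoundedNear at hT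
    push Not at hT
    exact hT U hU (A / δ)
  have hz0 : 0 < ‖z‖ := norm_pos_iff.2 fun h => by simp [h] at hz
  refine ⟨(δ / ‖z‖) • z, ?_, ?_, ?_⟩
  · exact (tsupport_smul_subset_right (fun _ => δ / ‖z‖) z).trans hzU
  · rw [norm_smul, Real.norm_of_nonneg (by positivity), div_mul_cancel₀ _ hz0.ne']
  · rw [map_smul, norm_smul, Real.norm_of_nonneg (by positivity)]
    calc A = δ / ‖z‖ * (A / δ * ‖z‖) := by field_simp
      _ < δ / ‖z‖ * ‖T z‖ := by gcongr

end

section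

variable {K E : Type*} [TopologicalSpace K] [CompactSpace K] [T2Space K]

theorem IsEpsBandPreserving.abs_apply_le_of_notMem_tsupport {ε : ℝ} {T : C(K, ℝ) → C(K, ℝ)}
    (hT : IsEpsBandPreserving ε T) {x : C(K, ℝ)} {t : K} (ht : t ∉ tsupport x) :
    |T x t| ≤ ε * ‖x‖ := by
  obtain ⟨f, hf0, hf1, hf01⟩ := exists_continuous_zero_one_of_isClosed (isClosed_tsupport x)
    isClosed_singleton (disjoint_singleton_right.2 ht)
  have hy : 0 ≤ |T x| * f := mul_nonneg (abs_nonneg _) fun s => (hf01 s).1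
  have hdisj : |x| ⊓ (|T x| * f) = 0 := by
    ext s
    by_cases hs : s ∈ tsupport x
    · simp [hf0 hs]
    · simpa [image_eq_zero_of_notMem_tsupport hs] using hy s
  calc |T x t| = (|T x| ⊓ (|T x| * f)) t := by simp [hf1 rfl]
    _ ≤ ‖|T x| ⊓ (|T x| * f)‖ := (Real.le_norm_self _).trans (ContinuousMap.norm_coe_le_norm _ t)
    _ ≤ ε * ‖x‖ := hT x _ hy hdisj

theorem isBoundedNear_of_isOpen_singleton [NormedAddCommGroup E] [NormedSpace ℝ E]
    (T : C(K, ℝ) →ₗ[ℝ] E) {t : K} (ht : IsOpen {t}) : IsBoundedNear T t := by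
  obtain ⟨χ, hχ0, hχ1, -⟩ := exists_continuous_zero_one_of_isClosed ht.isClosed_compl
    isClosed_singleton disjoint_compl_left
  refine ⟨{t}, ht.mem_nhds rfl, ‖T χ‖, fun x hx => ?_⟩
  have hxχ : x = x t • χ := by
    ext s
    by_cases hs : s = t
    · simp [hs, hχ1 rfl]
    · have hxs : x s = 0 := image_eq_zero_of_notMem_tsupport fun h => hs (hx h)
      simp [hxs, hχ0 hs]
  calc ‖T x‖ = ‖x t‖ * ‖T χ‖ := by rw [hxχ, map_smul, norm_smul, ← hxχ]
    _ ≤ ‖x‖ * ‖T χ‖ := by gcongr; exact ContinuousMap.norm_coe_le_norm x t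
    _ = ‖T χ‖ * ‖x‖ := mul_comm _ _

theorem exists_bound_of_forall_isBoundedNear [NormedAddCommGroup E] [NormedSpace ℝ E]
    {T : C(K, ℝ) →ₗ[ℝ] E} (hT : ∀ t, IsBoundedNear T t) :
    ∃ C : ℝ, ∀ x : C(K, ℝ), ‖T x‖ ≤ C * ‖x‖ := by
  choose U hU C hC using hT
  obtain ⟨s, hs⟩ := isCompact_univ.elim_finite_subcover (fun t => interior (U t))
    (fun _ => isOpen_interior) fun t _ => mem_iUnion.2 ⟨t, mem_interior_iff_mem_nhds.2 (hU t)⟩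
  obtain ⟨f, hf⟩ := PartitionOfUnity.exists_isSubordinate isClosed_univ
    (fun i : s => interior (U i)) (fun _ => isOpen_interior) (by simpa [iUnion_subtype] using hs)
  have hx : ∀ x : C(K, ℝ), x = ∑ i, f i * x := fun x => by
    ext t
    have h1 := f.sum_eq_one (mem_univ t)
    rw [finsum_eq_sum_of_fintype] at h1
    simp only [ContinuousMap.coe_sum, Finset.sum_apply, ContinuousMap.mul_apply, ← Finset.sum_mul,
      h1, one_mul]
  refine ⟨∑ i : s, |C i|, fun x => ?_⟩
  calc ‖T x‖ = ‖∑ i, T (f i * x)‖ := by rw [← map_sum, ← hx]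
    _ ≤ ∑ i, ‖T (f i * x)‖ := norm_sum_le _ _
    _ ≤ ∑ i : s, |C i| * ‖x‖ := by
      refine Finset.sum_le_sum fun i _ => ?_
      have hfi : ‖(f i : C(K, ℝ))‖ ≤ 1 := (ContinuousMap.norm_le _ zero_le_one).2 fun t => by
        rw [Real.norm_of_nonneg (f.nonneg i t)]; exact f.le_one i t
      have hfx : ‖f i * x‖ ≤ ‖x‖ :=
        (norm_mul_le _ _).trans (mul_le_of_le_one_left (norm_nonneg _) hfi)
      have hsupp : tsupport ⇑(f i * x) ⊆ U i :=
        tsupport_mul_subset_left.trans ((hf i).trans interior_subset)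
      exact (hC i _ hsupp).trans (mul_le_mul (le_abs_self _) hfx (norm_nonneg _) (abs_nonneg _))
    _ = (∑ i : s, |C i|) * ‖x‖ := (Finset.sum_mul _ _ _).symm

theorem exists_hump_of_not_isBoundedNear {T : C(K, ℝ) →ₗ[ℝ] C(K, ℝ)} {t₀ : K}
    (hT : ¬IsBoundedNear T t₀) {V : Set K} (hV : V ∈ 𝓝 t₀) {δ : ℝ} (hδ : 0 < δ) (A : ℝ) :
    ∃ (x : C(K, ℝ)) (t : K) (W : Set K), W ∈ 𝓝 t₀ ∧ IsClosed W ∧ W ⊆ V ∧ t ∉ W ∧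
      tsupport x ⊆ V ∧ ‖x‖ ≤ δ ∧ A < |T x t| := by
  obtain ⟨x, hxV, hxδ, hTx⟩ := exists_small_with_large_image_of_not_isBoundedNear hT hV hδ A
  have : Nonempty K := ⟨t₀⟩
  set O := {s | A < |T x s|}
  have hO : IsOpen O := isOpen_lt continuous_const (T x).continuous.abs
  have hOne : O.Nonempty := by
    by_contra! h
    refine hTx.not_ge ((ContinuousMap.norm_le_of_nonempty _).2 fun s => ?_)
    have hs : s ∉ O := h ▸ notMem_empty s
    exact not_lt.1 hs
  obtain ⟨t, htO, ht₀⟩ : ∃ t ∈ O, t ≠ t₀ := by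
    by_contra! h
    exact hT (isBoundedNear_of_isOpen_singleton T ((hOne.subset_singleton_iff.1 h) ▸ hO))
  obtain ⟨W, hW, hWc, hWV⟩ := exists_mem_nhds_isClosed_subset
    (sdiff_mem hV (isOpen_compl_singleton.mem_nhds ht₀.symm))
  exact ⟨x, t, W, hW, hWc, hWV.trans sdiff_subset, fun h => (hWV h).2 rfl, hxV, hxδ, htO⟩

theorem exists_glidingHump_seq {T : C(K, ℝ) →ₗ[ℝ] C(K, ℝ)} {t₀ : K}
    (hT : ¬IsBoundedNear T t₀) (A : ℕ → ℝ) :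
    ∃ (x : ℕ → C(K, ℝ)) (t : ℕ → K) (V : ℕ → Set K), Antitone V ∧ (∀ n, IsClosed (V n)) ∧
      (∀ n, tsupport (x n) ⊆ V n) ∧ (∀ n, t n ∉ V (n + 1)) ∧ (∀ n, ‖x n‖ ≤ (1 / 2) ^ n) ∧
      ∀ n, A n + ‖T (∑ m ∈ Finset.range n, x m)‖ < |T (x n) (t n)| := by
  have step (p : {V : Set K // V ∈ 𝓝 t₀} × C(K, ℝ)) (n : ℕ) :
      ∃ (x : C(K, ℝ)) (t : K) (W : {W : Set K // W ∈ 𝓝 t₀}), IsClosed W.1 ∧ W.1 ⊆ p.1 ∧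
        t ∉ W.1 ∧ tsupport x ⊆ p.1 ∧ ‖x‖ ≤ (1 / 2) ^ n ∧ A n + ‖T p.2‖ < |T x t| := by
    have hδ : (0 : ℝ) < (1 / 2) ^ n := by positivity
    obtain ⟨x, t, W, hW, h⟩ := exists_hump_of_not_isBoundedNear hT p.1.2 hδ (A n + ‖T p.2‖)
    exact ⟨x, t, ⟨W, hW⟩, h⟩
  choose x t W hWc hWV htW hxV hx hTx using step
  let p (n : ℕ) : {V : Set K // V ∈ 𝓝 t₀} × C(K, ℝ) :=
    Nat.rec (⟨univ, univ_mem⟩, 0) (fun n q => (W q n, q.2 + x q n)) n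
  have hp (n : ℕ) : (p n).2 = ∑ m ∈ Finset.range n, x (p m) m := by
    induction n with
    | zero => rfl
    | succ n ih => rw [Finset.sum_range_succ, ← ih]
  refine ⟨fun n => x (p n) n, fun n => t (p n) n, fun n => (p n).1.1,
    antitone_nat_of_succ_le fun n => hWV _ _, ?_, fun n => hxV _ _, fun n => htW _ _,
    fun n => hx _ _, fun n => hp n ▸ hTx _ _⟩
  rintro (_ | n)
  · exact isClosed_univ
  · exact hWc _ _

theorem IsEpsBandPreserving.isBoundedNear {ε : ℝ} {T : C(K, ℝ) →ₗ[ℝ] C(K, ℝ)}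
    (hT : IsEpsBandPreserving ε T) (t₀ : K) : IsBoundedNear T t₀ := by
  by_contra hsing
  obtain ⟨x, t, V, hV, hVc, hxV, htV, hx, hTx⟩ :=
    exists_glidingHump_seq hsing fun n => n + 2 * |ε|
  have hsum : Summable x := Summable.of_norm_bounded summable_geometric_two hx
  have htail (n : ℕ) : |T (∑' m, x (m + (n + 1))) (t n)| ≤ 2 * |ε| := by
    have hnorm : ‖∑' m, x (m + (n + 1))‖ ≤ 2 := tsum_of_norm_bounded hasSum_geometric_two
      fun m => (hx _).trans (pow_le_pow_of_le_one (by norm_num) (by norm_num) (by omega))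
    have hsupp : tsupport ⇑(∑' m, x (m + (n + 1))) ⊆ V (n + 1) :=
      tsupport_tsum_subset ((summable_nat_add_iff _).2 hsum) (hVc _)
        fun m => (hxV _).trans (hV (by omega))
    calc _ ≤ ε * ‖∑' m, x (m + (n + 1))‖ :=
          hT.abs_apply_le_of_notMem_tsupport fun h => htV n (hsupp h)
      _ ≤ |ε| * 2 := mul_le_mul (le_abs_self _) hnorm (norm_nonneg _) (abs_nonneg _)
      _ = 2 * |ε| := mul_comm _ _
  have hlarge (n : ℕ) : (n : ℝ) < ‖T (∑' m, x m)‖ := by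
    set head := ∑ m ∈ Finset.range n, x m
    set tail := ∑' m, x (m + (n + 1))
    have hsplit : T (∑' m, x m) (t n) = T head (t n) + T (x n) (t n) + T tail (t n) := by
      rw [← hsum.sum_add_tsum_nat_add (n + 1), Finset.sum_range_succ, map_add, map_add]
      rfl
    have hhead : |T head (t n)| ≤ ‖T head‖ := (T head).norm_coe_le_norm (t n)
    calc (n : ℝ) < |T (x n) (t n)| - |T head (t n)| - |T tail (t n)| := by
          linarith [hTx n, htail n]
      _ ≤ |T (∑' m, x m) (t n)| := by rw [hsplit]; grind [abs_add_le, abs_neg]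
      _ ≤ ‖T (∑' m, x m)‖ := (T (∑' m, x m)).norm_coe_le_norm (t n)
  obtain ⟨n, hn⟩ := exists_nat_gt ‖T (∑' m, x m)‖
  exact (hlarge n).not_gt hn

end

theorem epsBP_continuous_on_CK_general {K : Type*} [TopologicalSpace K] [CompactSpace K]
    [T2Space K] (ε : ℝ) (T : C(K, ℝ) →ₗ[ℝ] C(K, ℝ))
    (hT : IsEpsBandPreserving ε ⇑T) :
    Continuous T := by
  obtain ⟨C, hC⟩ := exists_bound_of_forall_isBoundedNear hT.isBoundedNear
  exact AddMonoidHomClass.continuous_of_bound T C hC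

/-- Every `ε`-band preserving linear map on `C(K)`, `K` compact Hausdorff, is
continuous. -/
theorem epsBP_continuous_on_CK {K : Type*} [TopologicalSpace K] [CompactSpace K]
    [T2Space K] (ε : ℝ) (hε : 0 ≤ ε) (T : C(K, ℝ) →ₗ[ℝ] C(K, ℝ))
    (hT : IsEpsBandPreserving ε ⇑T) :
    Continuous T :=
  epsBP_continuous_on_CK_general ε T hT
end

section
/- Let K be a compact Hausdorff space, X a Banach lattice, ε ≥ 0, and let T : C(K,X) → C(K,X) be an ε-band preserving linear map. If f ∈ C(K,X) vanishes on an open set V ⊆ K, then ‖(T f)(t)‖_X ≤ ε·‖f‖ for every t ∈ V. -/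
/-!
Complete regularity of `K` gives `k ∈ C(K,X)` vanishing off `V` with `k t = (T f) t`.
Since `f` vanishes on `V`, `|f| ⊓ |k| = 0`, so `ε`-band preservation bounds `‖|T f| ⊓ |k|‖`
by `ε ‖f‖`, and evaluating `|T f| ⊓ |k|` at `t` gives `|(T f) t|`.
-/

namespace ContinuousMap

variable {K X : Type*} [TopologicalSpace K]

theorem abs_inf_abs_eq_zero_of_zero_on_of_zero_off [AddCommGroup X] [Lattice X]
    [IsOrderedAddMonoid X] [TopologicalSpace X] [IsTopologicalAddGroup X] [TopologicalLattice X]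
    {f k : C(K, X)} {V : Set K} (hf : ∀ t ∈ V, f t = 0) (hk : ∀ t ∉ V, k t = 0) :
    |f| ⊓ |k| = 0 := by
  ext t
  change |f t| ⊓ |k t| = 0
  by_cases ht : t ∈ V
  · simp [hf t ht]
  · simp [hk t ht]

theorem exists_eq_zero_off_and_apply_eq [CompletelyRegularSpace K] [AddCommGroup X]
    [Module ℝ X] [TopologicalSpace X] [ContinuousSMul ℝ X] (h : C(K, X)) {V : Set K}
    (hV : IsOpen V) {t : K} (ht : t ∈ V) :
    ∃ k : C(K, X), (∀ s ∉ V, k s = 0) ∧ k t = h t := by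
  obtain ⟨φ, hφ, hφt, hφV⟩ := completelyRegularSpace_iff_isOpen.mp ‹_› t V hV ht
  refine ⟨⟨fun s ↦ (1 - (φ s : ℝ)) • h s, by fun_prop⟩, fun s hs ↦ ?_, ?_⟩
  · simp [show φ s = 1 from hφV hs]
  · simp [hφt]

end ContinuousMap

theorem IsEpsBandPreserving.norm_apply_le {K X : Type*} [TopologicalSpace K] [CompactSpace K]
    [NormedAddCommGroup X] [Lattice X] [HasSolidNorm X] [IsOrderedAddMonoid X] {ε : ℝ}
    {T : C(K, X) → C(K, X)} (hT : IsEpsBandPreserving ε T) {f k : C(K, X)}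
    (hfk : |f| ⊓ |k| = 0) {t : K} (hkt : k t = T f t) : ‖T f t‖ ≤ ε * ‖f‖ :=
  calc ‖T f t‖ = ‖(|T f| ⊓ |k|) t‖ := by
        change _ = ‖|T f t| ⊓ |k t|‖
        rw [hkt, inf_idem, norm_abs_eq_norm]
    _ ≤ ‖|T f| ⊓ |k|‖ := ContinuousMap.norm_coe_le_norm _ t
    _ ≤ ε * ‖f‖ := hT f |k| (abs_nonneg k) hfk

theorem epsBP_vanishing_on_open_general {K X : Type*} [TopologicalSpace K] [CompactSpace K]
    [T2Space K] [NormedAddCommGroup X] [Lattice X] [HasSolidNorm X] [IsOrderedAddMonoid X]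
    [NormedSpace ℝ X]
    (ε : ℝ) (T : C(K, X) →ₗ[ℝ] C(K, X)) (hT : IsEpsBandPreserving ε ⇑T)
    (f : C(K, X)) (V : Set K) (hV : IsOpen V) (hfV : ∀ t ∈ V, f t = 0) :
    ∀ t ∈ V, ‖(T f) t‖ ≤ ε * ‖f‖ := by
  intro t ht
  obtain ⟨k, hkV, hkt⟩ := ContinuousMap.exists_eq_zero_off_and_apply_eq (T f) hV ht
  exact hT.norm_apply_le (ContinuousMap.abs_inf_abs_eq_zero_of_zero_on_of_zero_off hfV hkV) hkt

/-- If `T` is an `ε`-band preserving linear map on `C(K,X)` and `f` vanishes on an open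
set `V`, then `‖(T f)(t)‖ ≤ ε ‖f‖` for every `t ∈ V`. -/
theorem epsBP_vanishing_on_open {K X : Type*} [TopologicalSpace K] [CompactSpace K]
    [T2Space K] [NormedAddCommGroup X] [Lattice X] [HasSolidNorm X] [IsOrderedAddMonoid X]
    [NormedSpace ℝ X] [CompleteSpace X]
    (ε : ℝ) (hε : 0 ≤ ε) (T : C(K, X) →ₗ[ℝ] C(K, X)) (hT : IsEpsBandPreserving ε ⇑T)
    (f : C(K, X)) (V : Set K) (hV : IsOpen V) (hfV : ∀ t ∈ V, f t = 0) :
    ∀ t ∈ V, ‖(T f) t‖ ≤ ε * ‖f‖ :=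
  epsBP_vanishing_on_open_general ε T hT f V hV hfV
end

section
/- Let K be a compact Hausdorff space without isolated points, X a Banach lattice, and ε ≥ 0. Then every ε-band preserving linear map T : C(K,X) → C(K,X) is continuous (bounded). -/
open Filter Topology Set Function

theorem exists_pairwise_disjoint_seq_of_forall_isOpen_mem {K : Type*} [TopologicalSpace K]
    (t₀ : K) (P : ℕ → Set K → Prop)
    (h : ∀ n W, IsOpen W → t₀ ∈ W → ∃ G ⊆ W, t₀ ∉ closure G ∧ P n G) :
    ∃ G : ℕ → Set K, Pairwise (Disjoint on G) ∧ ∀ n, P n (G n) := by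
  choose G hGW ht₀G hP using h
  let W : ℕ → {W : Set K // IsOpen W ∧ t₀ ∈ W} := fun n => Nat.rec ⟨univ, isOpen_univ, trivial⟩
    (fun n W => ⟨W.1 \ closure (G n W.1 W.2.1 W.2.2), W.2.1.sdiff isClosed_closure, W.2.2,
      ht₀G _ _ _ _⟩) n
  let G' : ℕ → Set K := fun n => G n (W n).1 (W n).2.1 (W n).2.2
  have hW : Antitone fun n => (W n).1 := antitone_nat_of_succ_le fun _ => sdiff_subset
  have hlt : ∀ m n, m < n → Disjoint (G' m) (G' n) := fun m n hmn =>
    disjoint_left.2 fun _ hxm hxn => (hW hmn (hGW _ _ _ _ hxn)).2 (subset_closure hxm)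
  refine ⟨G', fun m n hmn => ?_, fun n => hP _ _ _ _⟩
  rcases lt_or_gt_of_ne hmn with h | h
  exacts [hlt m n h, (hlt n m h).symm]

theorem exists_continuous_Icc_support_subset_eventuallyEq_one {K : Type*} [TopologicalSpace K]
    [NormalSpace K] [RegularSpace K] {s : K} {G : Set K} (hG : G ∈ 𝓝 s) :
    ∃ φ : C(K, ℝ), (∀ x, φ x ∈ Icc (0 : ℝ) 1) ∧ support φ ⊆ G ∧ φ =ᶠ[𝓝 s] 1 := by
  obtain ⟨V, hVs, hVc, hVG⟩ := exists_mem_nhds_isClosed_subset (interior_mem_nhds.2 hG)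
  obtain ⟨φ, hφ0, hφ1, hφI⟩ := exists_continuous_zero_one_of_isClosed
    isOpen_interior.isClosed_compl hVc (disjoint_compl_left_iff_subset.2 hVG)
  refine ⟨φ, hφI, fun x hx => interior_subset ?_, eventually_of_mem hVs fun x hx => hφ1 hx⟩
  by_contra hxG
  exact hx (hφ0 hxG)

namespace ContinuousMap

variable {K X : Type*} [TopologicalSpace K] [CompactSpace K] [NormedAddCommGroup X]
  [NormedSpace ℝ X]

theorem norm_smul_le_of_forall_norm_le_one {φ : C(K, ℝ)} (hφ : ∀ x, ‖φ x‖ ≤ 1) (f : C(K, X)) :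
    ‖φ • f‖ ≤ ‖f‖ :=
  (norm_le _ (norm_nonneg f)).2 fun x => by
    rw [smul_apply', norm_smul]
    exact (mul_le_of_le_one_left (norm_nonneg _) (hφ x)).trans (f.norm_coe_le_norm x)

theorem continuous_linearMap_of_forall_nhds_bound [T2Space K] {E : Type*} [NormedAddCommGroup E]
    [NormedSpace ℝ E] (T : C(K, X) →ₗ[ℝ] E)
    (h : ∀ t, ∃ U ∈ 𝓝 t, ∃ C, ∀ f : C(K, X), tsupport f ⊆ U → ‖f‖ ≤ 1 → ‖T f‖ ≤ C) :
    Continuous T := by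
  choose U hU C hC using h
  obtain ⟨S, -, hS⟩ := isCompact_univ.elim_nhds_subcover (fun t => interior (U t))
    fun t _ => interior_mem_nhds.2 (hU t)
  obtain ⟨p, hp⟩ := PartitionOfUnity.exists_isSubordinate isClosed_univ
    (fun i : S => interior (U i)) (fun _ => isOpen_interior) fun x _ => by
      obtain ⟨i, hi, hx⟩ := mem_iUnion₂.1 (hS (mem_univ x))
      exact mem_iUnion.2 ⟨⟨i, hi⟩, hx⟩
  have hp_le : ∀ i x, ‖p i x‖ ≤ 1 := fun i x => by
    rw [Real.norm_of_nonneg (p.nonneg i x)]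
    exact p.le_one i x
  have hsum : ∀ f : C(K, X), ∑ i : S, p i • f = f := fun f => by
    ext x
    simp only [sum_apply, smul_apply', ← Finset.sum_smul]
    rw [← finsum_eq_sum_of_fintype, p.sum_eq_one (mem_univ x), one_smul]
  obtain ⟨B, hB⟩ := LinearMap.bound_of_ball_bound one_pos (∑ i : S, C i) T fun f hf => by
    have hf : ‖f‖ ≤ 1 := (mem_ball_zero_iff.1 hf).le
    calc ‖T f‖ = ‖∑ i, T (p i • f)‖ := by rw [← map_sum, hsum]
      _ ≤ ∑ i, ‖T (p i • f)‖ := norm_sum_le _ _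
      _ ≤ ∑ i : S, C i := Finset.sum_le_sum fun i _ => hC i _
          ((tsupport_smul_subset_left _ _).trans ((hp i).trans interior_subset))
          ((norm_smul_le_of_forall_norm_le_one (hp_le i) f).trans hf)
  exact AddMonoidHomClass.continuous_of_bound T B hB

end ContinuousMap

namespace IsEpsBandPreserving

variable {K X : Type*} [TopologicalSpace K] [CompactSpace K] [T2Space K] [NormedAddCommGroup X]
  [Lattice X] [HasSolidNorm X] [IsOrderedAddMonoid X] [NormedSpace ℝ X] {ε : ℝ}

theorem norm_apply_le_of_eventuallyEq_zero {T : C(K, X) → C(K, X)}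
    (hT : IsEpsBandPreserving ε T) {f : C(K, X)} {t : K} (hf : f =ᶠ[𝓝 t] 0) :
    ‖T f t‖ ≤ ε * ‖f‖ := by
  obtain ⟨φ, -, hφf, hφt⟩ := exists_continuous_Icc_support_subset_eventuallyEq_one hf
  -- `|φ • T f|` is disjoint from `f` but agrees with `|T f|` at `t`.
  set g : C(K, X) := |φ • T f|
  have hdisj : |f| ⊓ g = 0 := by
    ext x
    simp only [g, ContinuousMap.inf_apply, ContinuousMap.abs_apply, ContinuousMap.smul_apply',
      ContinuousMap.zero_apply]
    by_cases hx : φ x = 0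
    · simp [hx]
    · simp [show f x = 0 from hφf hx]
  have hgt : g t = |T f t| := by simp [g, hφt.self_of_nhds]
  calc ‖T f t‖ = ‖(|T f| ⊓ g) t‖ := by simp [hgt, norm_abs_eq_norm]
    _ ≤ ‖|T f| ⊓ g‖ := ContinuousMap.norm_coe_le_norm _ t
    _ ≤ ε * ‖f‖ := hT f g (abs_nonneg _) hdisj

theorem exists_hump (hε : 0 ≤ ε) {T : C(K, X) →ₗ[ℝ] C(K, X)} (hT : IsEpsBandPreserving ε T)
    {t₀ : K} (ht₀ : ¬ IsOpen {t₀})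
    (hunb : ∀ U ∈ 𝓝 t₀, ∀ C, ∃ f : C(K, X), tsupport f ⊆ U ∧ ‖f‖ ≤ 1 ∧ C < ‖T f‖)
    {W : Set K} (hW : IsOpen W) (ht₀W : t₀ ∈ W) {C : ℝ} (hC : 0 ≤ C) :
    ∃ G ⊆ W, t₀ ∉ closure G ∧ IsOpen G ∧
      ∃ g : C(K, X), support g ⊆ G ∧ ‖g‖ ≤ 1 ∧ ∃ s ∈ G, C < ‖T g s‖ := by
  obtain ⟨f, hfW, hf, hTf⟩ := hunb W (hW.mem_nhds ht₀W) (C + 2 * ε)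
  obtain ⟨s, hsTf, hst₀⟩ : ∃ s, C + 2 * ε < ‖T f s‖ ∧ s ≠ t₀ := by
    obtain ⟨x, hx⟩ : ∃ x, C + 2 * ε < ‖T f x‖ := by
      by_contra! h
      exact hTf.not_ge ((ContinuousMap.norm_le _ (by positivity)).2 h)
    exact (dense_compl_singleton_iff_not_open.2 ht₀).inter_open_nonempty _
      (isOpen_lt continuous_const (T f).continuous.norm) ⟨x, hx⟩
  have hsW : s ∈ W := hfW <| by
    by_contra hs
    have := hT.norm_apply_le_of_eventuallyEq_zero (notMem_tsupport_iff_eventuallyEq.1 hs)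
    nlinarith [mul_le_of_le_one_right hε hf]
  obtain ⟨V, hVs, hVc, hVW⟩ := exists_mem_nhds_isClosed_subset
    ((hW.sdiff isClosed_singleton).mem_nhds ⟨hsW, hst₀⟩)
  obtain ⟨ψ, hψI, hψV, hψs⟩ :=
    exists_continuous_Icc_support_subset_eventuallyEq_one (interior_mem_nhds.2 hVs)
  have hψ : ∀ x, ‖ψ x‖ ≤ 1 := fun x => by
    rw [Real.norm_of_nonneg (hψI x).1]
    exact (hψI x).2
  have hrest : ‖T (f - ψ • f) s‖ ≤ 2 * ε := by
    have hvan : f - ψ • f =ᶠ[𝓝 s] 0 := hψs.mono fun x hx => by simp [hx]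
    calc ‖T (f - ψ • f) s‖ ≤ ε * ‖f - ψ • f‖ := hT.norm_apply_le_of_eventuallyEq_zero hvan
      _ ≤ ε * (1 + 1) := by
        gcongr
        exact (norm_sub_le _ _).trans
          (add_le_add hf ((ContinuousMap.norm_smul_le_of_forall_norm_le_one hψ f).trans hf))
      _ = 2 * ε := by ring
  refine ⟨interior V, interior_subset.trans (hVW.trans sdiff_subset),
    fun h => (hVW (closure_minimal interior_subset hVc h)).2 rfl, isOpen_interior, ψ • f,
    (support_smul_subset_left _ _).trans hψV,
    (ContinuousMap.norm_smul_le_of_forall_norm_le_one hψ f).trans hf, s,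
    mem_interior_iff_mem_nhds.2 hVs, ?_⟩
  have hsplit : T (ψ • f) s = T f s - T (f - ψ • f) s := by simp
  rw [hsplit]
  linarith [norm_sub_norm_le (T f s) (T (f - ψ • f) s)]

theorem exists_gliding_hump [CompleteSpace X] (hε : 0 ≤ ε) {T : C(K, X) →ₗ[ℝ] C(K, X)}
    (hT : IsEpsBandPreserving ε T) {G : ℕ → Set K} (hGo : ∀ n, IsOpen (G n))
    (hG : Pairwise (Disjoint on G)) {g : ℕ → C(K, X)} (hgG : ∀ n, support (g n) ⊆ G n)
    (hg : ∀ n, ‖g n‖ ≤ 1) {s : ℕ → K} (hs : ∀ n, s n ∈ G n) :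
    ∃ F : C(K, X), ∀ n, (1 / 2 : ℝ) ^ n * ‖T (g n) (s n)‖ ≤ ‖T F‖ + 3 * ε := by
  set c : ℕ → ℝ := fun n => (1 / 2 : ℝ) ^ n
  have hcg : ∀ n, ‖c n • g n‖ ≤ c n := fun n => by
    rw [norm_smul, Real.norm_of_nonneg (by positivity)]
    exact mul_le_of_le_one_right (by positivity) (hg n)
  have hsum : Summable fun n => c n • g n :=
    Summable.of_norm_bounded hasSum_geometric_two.summable hcg
  refine ⟨∑' n, c n • g n, fun n => ?_⟩
  set F := ∑' n, c n • g n
  -- The other terms vanish on `G n` by disjointness.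
  have hFn : F - c n • g n =ᶠ[𝓝 (s n)] 0 := eventually_of_mem ((hGo n).mem_nhds (hs n))
    fun x hx => by
      rw [ContinuousMap.sub_apply, ← ContinuousMap.tsum_apply hsum, tsum_eq_single n, sub_self]
      · rfl
      intro m hm
      rw [ContinuousMap.smul_apply,
        notMem_support.1 fun hxm => (hG hm).ne_of_mem (hgG m hxm) hx rfl, smul_zero]
  have hrest : ‖T (F - c n • g n) (s n)‖ ≤ 3 * ε :=
    calc ‖T (F - c n • g n) (s n)‖ ≤ ε * ‖F - c n • g n‖ :=
          hT.norm_apply_le_of_eventuallyEq_zero hFn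
      _ ≤ ε * (2 + 1) := by
        gcongr
        exact (norm_sub_le _ _).trans (add_le_add (tsum_of_norm_bounded hasSum_geometric_two hcg)
          ((hcg n).trans (pow_le_one₀ (by norm_num) (by norm_num))))
      _ = 3 * ε := by ring
  calc c n * ‖T (g n) (s n)‖ = ‖T F (s n) - T (F - c n • g n) (s n)‖ := by
        simp [norm_smul, c]
    _ ≤ ‖T F (s n)‖ + ‖T (F - c n • g n) (s n)‖ := norm_sub_le _ _
    _ ≤ ‖T F‖ + 3 * ε := add_le_add (ContinuousMap.norm_coe_le_norm _ _) hrest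

end IsEpsBandPreserving

/-- If `K` is a compact Hausdorff space without isolated points and `X` is a Banach
lattice, then every `ε`-band preserving linear map on `C(K,X)` is continuous. -/
theorem epsBP_continuous_on_CKX_no_isolated {K X : Type*} [TopologicalSpace K]
    [CompactSpace K] [T2Space K] [NormedAddCommGroup X] [Lattice X] [HasSolidNorm X]
    [IsOrderedAddMonoid X] [NormedSpace ℝ X]
    [CompleteSpace X] (hK : ∀ t : K, ¬ IsOpen ({t} : Set K))
    (ε : ℝ) (hε : 0 ≤ ε) (T : C(K, X) →ₗ[ℝ] C(K, X)) (hT : IsEpsBandPreserving ε ⇑T) :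
    Continuous T := by
  by_contra hcont
  obtain ⟨t₀, ht₀⟩ : ∃ t₀ : K, ∀ U ∈ 𝓝 t₀, ∀ C, ∃ f : C(K, X),
      tsupport f ⊆ U ∧ ‖f‖ ≤ 1 ∧ C < ‖T f‖ := by
    by_contra! h
    exact hcont (ContinuousMap.continuous_linearMap_of_forall_nhds_bound T h)
  set C : ℕ → ℝ := fun n => 2 ^ n * (n + 3 * ε)
  obtain ⟨G, hG, hGP⟩ := exists_pairwise_disjoint_seq_of_forall_isOpen_mem t₀ _
    fun n _ hW ht₀W => hT.exists_hump hε (hK t₀) ht₀ hW ht₀W (C := C n) (by positivity)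
  choose hGo g hgG hg s hs hgs using hGP
  obtain ⟨F, hF⟩ := hT.exists_gliding_hump hε hGo hG hgG hg hs
  obtain ⟨n, hn⟩ := exists_nat_gt ‖T F‖
  have hCn : (1 / 2 : ℝ) ^ n * C n = n + 3 * ε := by
    simp only [C, ← mul_assoc, ← mul_pow]
    norm_num
  have := mul_lt_mul_of_pos_left (hgs n) (by positivity : (0 : ℝ) < (1 / 2) ^ n)
  linarith [hF n]
end

section
/- Let K be a compact Hausdorff space, let C(K) denote the Banach lattice of continuous real-valued functions on K with supremum norm and pointwise order, and let ε ≥ 0. For a linear map T : C(K) → C(K), the following are equivalent: (1) T is ε-band preserving; (2) for every x ∈ C(K) and every t ∈ K with x(t) = 0, one has |(T x)(t)| ≤ ε·‖x‖. -/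
/-!
If `v` vanishes on a neighbourhood of `s`, an Urysohn function `y` supported there and peaking
at `s` is disjoint from `|v|`, so ε-band preservation gives `|(T v)(s)| ≤ ε‖v‖`. For `x(t) = 0`,
split `x = φx + (1 - φ)x` with `φ = 1` near `t` and `φx` uniformly small; the second part vanishes
near `t`. It remains to see that `u ↦ (T u)(t)` is bounded on `{u | u(t) = 0}`. If not (and `t`
is not isolated), a gliding hump gives `U = ∑ uₙ` with `‖uₙ‖ ≤ 2⁻ⁿ`, `uₙ` supported in shrinking
neighbourhoods `Bₙ` of `t`, and points `sₙ ∉ closure Bₙ₊₁` at which `|∑_{k ≤ n} T uₖ|` exceeds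
`n`; the tail of `U` vanishes near `sₙ`, so `‖T U‖ ≥ n - 2ε` for every `n`.
-/

open Filter Finset Topology TopologicalSpace

theorem LinearMap.exists_norm_le_lt_abs {E : Type*} [NormedAddCommGroup E] [NormedSpace ℝ E]
    {f : E →ₗ[ℝ] ℝ} {p : Submodule ℝ E} (h : ∀ C : ℝ, ∃ u ∈ p, C * ‖u‖ < |f u|) {δ : ℝ}
    (hδ : 0 < δ) (M : ℝ) : ∃ u ∈ p, ‖u‖ ≤ δ ∧ M < |f u| := by
  obtain ⟨u, hup, hu⟩ := h (M / δ)
  have hu0 : 0 < ‖u‖ := norm_pos_iff.2 fun h0 => by simp [h0] at hu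
  refine ⟨(δ / ‖u‖) • u, p.smul_mem _ hup, ?_, ?_⟩
  · rw [norm_smul, Real.norm_of_nonneg (by positivity), div_mul_cancel₀ _ hu0.ne']
  · rw [map_smul, smul_eq_mul, abs_mul, abs_of_pos (by positivity)]
    calc M = δ / ‖u‖ * (M / δ * ‖u‖) := by field_simp
      _ < δ / ‖u‖ * |f u| := by gcongr

section

variable {K : Type*} [TopologicalSpace K] [CompactSpace K] {ε : ℝ}

theorem isEpsBandPreserving_of_abs_apply_le {T : C(K, ℝ) → C(K, ℝ)} (hε : 0 ≤ ε)
    (h : ∀ x t, x t = 0 → |T x t| ≤ ε * ‖x‖) : IsEpsBandPreserving ε T := by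
  intro x y hy hxy
  refine (ContinuousMap.norm_le _ (by positivity)).2 fun s => ?_
  have hdisj : |x s| ⊓ y s = 0 := DFunLike.congr_fun hxy s
  have hys : 0 ≤ y s := hy s
  rw [Real.norm_eq_abs, ContinuousMap.inf_apply, ContinuousMap.abs_apply,
    abs_of_nonneg (le_inf (abs_nonneg _) hys)]
  rcases le_total |x s| (y s) with hle | hle
  · have hxs : x s = 0 := abs_eq_zero.1 (by rwa [inf_eq_left.2 hle] at hdisj)
    exact inf_le_left.trans (h x s hxs)
  · rw [inf_eq_right.2 hle] at hdisj
    rw [hdisj, inf_eq_right.2 (abs_nonneg _)]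
    positivity

variable [T2Space K]

theorem IsEpsBandPreserving.abs_apply_le_of_eventuallyEq_zero {T : C(K, ℝ) → C(K, ℝ)}
    (hT : IsEpsBandPreserving ε T) {v : C(K, ℝ)} {s : K} (hv : v =ᶠ[𝓝 s] 0) :
    |T v s| ≤ ε * ‖v‖ := by
  obtain ⟨U, hvU, hUo, hsU⟩ := eventually_nhds_iff.1 hv
  obtain ⟨φ, hφU, hφs, hφ01⟩ := exists_continuous_zero_one_of_isClosed hUo.isClosed_compl
    (isClosed_singleton (x := s)) (Set.disjoint_singleton_right.2 (not_not.2 hsU))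
  set c := |T v s|
  have hy : 0 ≤ c • φ := fun x => mul_nonneg (abs_nonneg _) (hφ01 x).1
  have hdisj : |v| ⊓ c • φ = 0 := by
    ext x
    by_cases hx : x ∈ U
    · simpa [hvU x hx] using hy x
    · simp [hφU hx]
  have hval : (|T v| ⊓ c • φ) s = c := by
    simp [hφs rfl, c]
  calc c = ‖(|T v| ⊓ c • φ) s‖ := by rw [hval, Real.norm_of_nonneg (abs_nonneg _)]
    _ ≤ ‖|T v| ⊓ c • φ‖ := ContinuousMap.norm_coe_le_norm _ s
    _ ≤ ε * ‖v‖ := hT v _ hy hdisj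

theorem IsEpsBandPreserving.exists_small_abs_apply_le {T : C(K, ℝ) →ₗ[ℝ] C(K, ℝ)} (hε : 0 ≤ ε)
    (hT : IsEpsBandPreserving ε T) {u : C(K, ℝ)} {t : K} (hut : u t = 0) {η : ℝ} (hη : 0 < η)
    {B : Set K} (hB : B ∈ 𝓝 t) :
    ∃ u' : C(K, ℝ), u' t = 0 ∧ ‖u'‖ ≤ η ∧ (∀ x ∉ B, u' x = 0) ∧
      |T u t| ≤ |T u' t| + ε * ‖u‖ := by
  obtain ⟨O, hOB, hOo, htO⟩ := mem_nhds_iff.1 hB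
  set W := O ∩ {x | |u x| < η}
  have hWo : IsOpen W := hOo.inter (isOpen_lt u.continuous.abs continuous_const)
  obtain ⟨F, hFt, hFc, hFW⟩ := exists_mem_nhds_isClosed_subset
    (hWo.mem_nhds ⟨htO, by simpa [hut] using hη⟩)
  obtain ⟨φ, hφW, hφF, hφ01⟩ := exists_continuous_zero_one_of_isClosed hWo.isClosed_compl hFc
    (Set.disjoint_compl_left_iff_subset.2 hFW)
  have hφ : ∀ x, |φ x| ≤ 1 := fun x => abs_le.2 ⟨by linarith [(hφ01 x).1], (hφ01 x).2⟩
  have hφ' : ∀ x, |1 - φ x| ≤ 1 := fun x =>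
    abs_le.2 ⟨by linarith [(hφ01 x).2], by linarith [(hφ01 x).1]⟩
  refine ⟨φ * u, by simp [hut], ?_, fun x hx => ?_, ?_⟩
  · refine (ContinuousMap.norm_le _ hη.le).2 fun x => ?_
    rw [ContinuousMap.mul_apply, norm_mul, Real.norm_eq_abs, Real.norm_eq_abs]
    by_cases hx : x ∈ W
    · exact (mul_le_of_le_one_left (abs_nonneg _) (hφ x)).trans hx.2.le
    · simp [hφW hx, hη.le]
  · simp [hφW fun hxW => hx (hOB hxW.1)]
  · have hrest : u - φ * u =ᶠ[𝓝 t] 0 :=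
      Filter.mem_of_superset hFt fun x hx => by simp [hφF hx]
    have hnorm : ‖u - φ * u‖ ≤ ‖u‖ := by
      refine (ContinuousMap.norm_le _ (norm_nonneg u)).2 fun x => ?_
      calc ‖(u - φ * u) x‖ = |1 - φ x| * ‖u x‖ := by
            simp only [ContinuousMap.sub_apply, ContinuousMap.mul_apply, Real.norm_eq_abs,
              ← abs_mul]
            ring_nf
        _ ≤ ‖u‖ := (mul_le_of_le_one_left (norm_nonneg _) (hφ' x)).trans (u.norm_coe_le_norm x)
    have hsplit : T u t = T (φ * u) t + T (u - φ * u) t := by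
      rw [← ContinuousMap.add_apply, ← map_add, add_sub_cancel]
    calc |T u t| ≤ |T (φ * u) t| + |T (u - φ * u) t| := hsplit ▸ abs_add_le _ _
      _ ≤ |T (φ * u) t| + ε * ‖u‖ := by
        gcongr
        exact (hT.abs_apply_le_of_eventuallyEq_zero hrest).trans (by gcongr)

theorem IsEpsBandPreserving.abs_sum_apply_sub_le_norm_tsum {T : C(K, ℝ) →ₗ[ℝ] C(K, ℝ)}
    (hε : 0 ≤ ε) (hT : IsEpsBandPreserving ε T) {u : ℕ → C(K, ℝ)} {B : ℕ → Set K}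
    (hu : Summable (‖u ·‖)) (hB : Antitone B) (hsupp : ∀ n, ∀ x ∉ B n, u n x = 0) {n : ℕ}
    {s : K} (hs : s ∉ closure (B (n + 1))) :
    |(∑ k ∈ range (n + 1), T (u k)) s| - ε * ∑' k, ‖u k‖ ≤ ‖T (∑' k, u k)‖ := by
  obtain ⟨r, hr_def⟩ : ∃ r, r = ∑' k, u (k + (n + 1)) := ⟨_, rfl⟩
  have htail : Summable fun k => ‖u (k + (n + 1))‖ :=
    (summable_nat_add_iff (f := (‖u ·‖)) (n + 1)).2 hu
  have hsplit : T (∑' k, u k) = ∑ k ∈ range (n + 1), T (u k) + T r := by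
    rw [hr_def, ← map_sum, ← map_add, hu.of_norm.sum_add_tsum_nat_add (n + 1)]
  have hr : r =ᶠ[𝓝 s] 0 := by
    refine Filter.eventually_of_mem (isClosed_closure.isOpen_compl.mem_nhds hs) fun x hx => ?_
    have hx' : x ∉ B (n + 1) := fun h => (Set.mem_compl_iff _ _).1 hx (subset_closure h)
    calc r x = ∑' k, u (k + (n + 1)) x := by
          rw [hr_def]
          exact (ContinuousMap.evalCLM ℝ x).map_tsum htail.of_norm
      _ = 0 := by simp [hsupp _ x fun h => hx' (hB (Nat.le_add_left _ _) h)]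
  have hrnorm : ‖r‖ ≤ ∑' k, ‖u k‖ := by
    rw [hr_def]
    exact (norm_tsum_le_tsum_norm htail).trans
      (tsum_comp_le_tsum_of_inj (f := (‖u ·‖)) (i := (· + (n + 1))) hu (fun _ => norm_nonneg _)
        (add_left_injective (n + 1)))
  have hrs : |T r s| ≤ ε * ∑' k, ‖u k‖ :=
    (hT.abs_apply_le_of_eventuallyEq_zero hr).trans (by gcongr)
  calc |(∑ k ∈ range (n + 1), T (u k)) s| - ε * ∑' k, ‖u k‖
      ≤ |(∑ k ∈ range (n + 1), T (u k)) s| - |T r s| := by linarith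
    _ ≤ |T (∑' k, u k) s| := by
      rw [hsplit, ContinuousMap.add_apply]
      exact abs_sub_abs_le_abs_add _ _
    _ ≤ ‖T (∑' k, u k)‖ := (T (∑' k, u k)).norm_coe_le_norm s

section Unbounded

variable {T : C(K, ℝ) →ₗ[ℝ] C(K, ℝ)} {t : K}
  (hε : 0 ≤ ε) (hT : IsEpsBandPreserving ε T) (h : ∀ C : ℝ, ∃ u, u t = 0 ∧ C * ‖u‖ < |T u t|)
include hε hT h

theorem IsEpsBandPreserving.exists_norm_le_lt_abs_apply_of_unbounded {δ : ℝ} (hδ : 0 < δ)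
    (M : ℝ) {B : Set K} (hB : B ∈ 𝓝 t) :
    ∃ u : C(K, ℝ), ‖u‖ ≤ δ ∧ (∀ x ∉ B, u x = 0) ∧ M < |T u t| := by
  obtain ⟨u, hut, hu, hlt⟩ : ∃ u : C(K, ℝ), u t = 0 ∧ ‖u‖ ≤ δ ∧ M + ε * δ < |T u t| :=
    LinearMap.exists_norm_le_lt_abs (f := (ContinuousMap.evalCLM ℝ t).toLinearMap ∘ₗ T)
      (p := LinearMap.ker (ContinuousMap.evalCLM ℝ t).toLinearMap) h hδ _
  obtain ⟨u', -, hu', hsupp, hle⟩ := hT.exists_small_abs_apply_le hε hut hδ hB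
  have : ε * ‖u‖ ≤ ε * δ := by gcongr
  exact ⟨u', hu', hsupp, by linarith⟩

theorem IsEpsBandPreserving.exists_hump_of_unbounded [(𝓝[≠] t).NeBot] (n : ℕ)
    (B : OpenNhdsOf t) (g : C(K, ℝ)) :
    ∃ (u : C(K, ℝ)) (V : OpenNhdsOf t) (s : K), ‖u‖ ≤ (1 / 2) ^ n ∧ (∀ x ∉ B, u x = 0) ∧
      V ≤ B ∧ s ∉ closure (V : Set K) ∧ n < |(g + T u) s| := by
  obtain ⟨u, hu, hsupp, hlt⟩ := hT.exists_norm_le_lt_abs_apply_of_unbounded hε h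
    (by positivity : (0 : ℝ) < (1 / 2) ^ n) (n + |g t|) (B.isOpen.mem_nhds B.mem)
  have hgt : (n : ℝ) < |(g + T u) t| := by
    have := abs_sub_abs_le_abs_sub (T u t) (-g t)
    rw [abs_neg, sub_neg_eq_add, add_comm] at this
    exact lt_of_lt_of_le (by linarith) this
  have hnear : ∀ᶠ x in 𝓝 t, (n : ℝ) < |(g + T u) x| :=
    continuousAt_const.eventually_lt (g + T u).continuous.abs.continuousAt hgt
  obtain ⟨s, hs, hst⟩ := ((eventually_nhdsWithin_of_eventually_nhds hnear).and
    (self_mem_nhdsWithin : {t}ᶜ ∈ 𝓝[≠] t)).exists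
  obtain ⟨V, htV, hVo, W, hsW, -, hVW⟩ := exists_open_nhds_disjoint_closure (Ne.symm hst)
  refine ⟨u, B ⊓ ⟨⟨V, hVo⟩, htV⟩, s, hu, hsupp, inf_le_left, fun hsV => ?_, hs⟩
  exact hVW.ne_of_mem (closure_mono Set.inter_subset_right hsV) (subset_closure hsW) rfl

theorem IsEpsBandPreserving.exists_hump_sequence_of_unbounded [(𝓝[≠] t).NeBot] :
    ∃ (u : ℕ → C(K, ℝ)) (B : ℕ → Set K) (s : ℕ → K), Summable (‖u ·‖) ∧ Antitone B ∧
      (∀ n, ∀ x ∉ B n, u n x = 0) ∧ (∀ n, s n ∉ closure (B (n + 1))) ∧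
      ∀ n : ℕ, n < |(∑ k ∈ range (n + 1), T (u k)) (s n)| := by
  choose u V s hu using hT.exists_hump_of_unbounded hε h
  -- the state after `n` steps: the current neighbourhood of `t` and `∑ k < n, T (u k)`
  let state : ℕ → OpenNhdsOf t × C(K, ℝ) := fun n =>
    Nat.rec (⊤, 0) (fun n q => (V n q.1 q.2, q.2 + T (u n q.1 q.2))) n
  have hstate : ∀ n, (state n).2 = ∑ k ∈ range n, T (u k (state k).1 (state k).2) := by
    intro n
    induction n with
    | zero => rfl
    | succ n ih => rw [sum_range_succ, ← ih]
  refine ⟨fun n => u n (state n).1 (state n).2, fun n => (state n).1,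
    fun n => s n (state n).1 (state n).2, ?_, ?_, fun n => (hu n _ _).2.1,
    fun n => (hu n _ _).2.2.2.1, fun n => ?_⟩
  · exact Summable.of_nonneg_of_le (fun n => norm_nonneg _) (fun n => (hu n _ _).1)
      summable_geometric_two
  · exact antitone_nat_of_succ_le fun n => (hu n _ _).2.2.1
  · rw [sum_range_succ, ← hstate]
    exact (hu n _ _).2.2.2.2

end Unbounded

theorem IsEpsBandPreserving.exists_bound_of_apply_eq_zero {T : C(K, ℝ) →ₗ[ℝ] C(K, ℝ)}
    (hε : 0 ≤ ε) (hT : IsEpsBandPreserving ε T) (t : K) :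
    ∃ C : ℝ, ∀ u : C(K, ℝ), u t = 0 → |T u t| ≤ C * ‖u‖ := by
  by_contra! h
  rcases (𝓝[≠] t).eq_or_neBot with hiso | hne
  · obtain ⟨u, hut, hlt⟩ := h ε
    have hu : u =ᶠ[𝓝 t] 0 := Filter.mem_of_superset
      (((isOpen_singleton_iff_punctured_nhds t).2 hiso).mem_nhds rfl) fun x hx => by
        simp [Set.mem_singleton_iff.1 hx, hut]
    exact (hT.abs_apply_le_of_eventuallyEq_zero hu).not_gt hlt
  · obtain ⟨u, B, s, hu, hB, hsupp, hs, hlt⟩ := hT.exists_hump_sequence_of_unbounded hε h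
    obtain ⟨n, hn⟩ := exists_nat_gt (‖T (∑' k, u k)‖ + ε * ∑' k, ‖u k‖)
    have := hT.abs_sum_apply_sub_le_norm_tsum hε hu hB hsupp (hs n)
    linarith [hlt n]

theorem IsEpsBandPreserving.abs_apply_le_of_apply_eq_zero {T : C(K, ℝ) →ₗ[ℝ] C(K, ℝ)}
    (hε : 0 ≤ ε) (hT : IsEpsBandPreserving ε T) {x : C(K, ℝ)} {t : K} (hx : x t = 0) :
    |T x t| ≤ ε * ‖x‖ := by
  obtain ⟨C, hC⟩ := hT.exists_bound_of_apply_eq_zero hε t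
  refine le_of_forall_pos_le_add fun δ hδ => ?_
  have hC1 : 0 < |C| + 1 := by positivity
  obtain ⟨u, hut, hu, -, hle⟩ := hT.exists_small_abs_apply_le hε hx (div_pos hδ hC1) univ_mem
  calc |T x t| ≤ |T u t| + ε * ‖x‖ := hle
    _ ≤ (|C| + 1) * (δ / (|C| + 1)) + ε * ‖x‖ := by
      gcongr
      exact (hC u hut).trans (by gcongr; linarith [le_abs_self C])
    _ = ε * ‖x‖ + δ := by rw [mul_div_cancel₀ _ hC1.ne', add_comm]

end

/-- For a linear map `T` on `C(K)`, `K` compact Hausdorff: `T` is `ε`-band preserving iff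
`|(T x)(t)| ≤ ε ‖x‖` whenever `x(t) = 0`. -/
theorem epsBP_iff_pointwise_on_CK {K : Type*} [TopologicalSpace K] [CompactSpace K]
    [T2Space K] (ε : ℝ) (hε : 0 ≤ ε) (T : C(K, ℝ) →ₗ[ℝ] C(K, ℝ)) :
    IsEpsBandPreserving ε ⇑T ↔
      ∀ x : C(K, ℝ), ∀ t : K, x t = 0 → |(T x) t| ≤ ε * ‖x‖ :=
  ⟨fun hT _ _ hx => hT.abs_apply_le_of_apply_eq_zero hε hx, isEpsBandPreserving_of_abs_apply_le hε⟩
end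

section
/- Let K be a compact Hausdorff space, let C(K) denote the Banach lattice of continuous real-valued functions on K with supremum norm and pointwise order, let ε ≥ 0, and let T : C(K) → C(K) be a bounded linear operator that is ε-band preserving. Then T is ε-disjointness preserving: for all x, y ∈ C(K) with |x| ⊓ |y| = 0, one has ‖|T x| ⊓ |T y|‖ ≤ ε·max(‖x‖, ‖y‖). Moreover, for all disjoint x, y ∈ C(K), the pointwise product satisfies ‖(T x)·(T y)‖ ≤ ε·‖T‖·‖x‖·‖y‖. -/
theorem ContinuousMap.abs_inf_abs_eq_zero_iff {K : Type*} [TopologicalSpace K] {x y : C(K, ℝ)} :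
    |x| ⊓ |y| = 0 ↔ ∀ s, x s = 0 ∨ y s = 0 := by
  simp only [ContinuousMap.ext_iff, inf_apply, abs_apply, zero_apply]
  exact forall_congr' fun s => by grind

theorem smul_inv_norm_smul {E : Type*} [NormedAddCommGroup E] [NormedSpace ℝ E] (x : E) :
    ‖x‖ • ‖x‖⁻¹ • x = x := by
  rcases eq_or_ne x 0 with rfl | hx
  · simp
  · exact smul_inv_smul₀ (norm_ne_zero_iff.mpr hx) x

namespace IsEpsBandPreserving

open ContinuousMap

variable {K : Type*} [TopologicalSpace K] [CompactSpace K] {ε : ℝ} {T : C(K, ℝ) →L[ℝ] C(K, ℝ)}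
  {x y : C(K, ℝ)}

theorem min_abs_apply_le (hT : IsEpsBandPreserving ε ⇑T) (hxy : |x| ⊓ |y| = 0) (t : K) :
    min |T x t| |y t| ≤ ε * ‖x‖ :=
  calc min |T x t| |y t| = (|T x| ⊓ |y|) t := rfl
    _ ≤ ‖(|T x| ⊓ |y|) t‖ := le_abs_self _
    _ ≤ ‖|T x| ⊓ |y|‖ := norm_coe_le_norm _ t
    _ ≤ ε * ‖x‖ := hT x |y| (abs_nonneg y) hxy

theorem abs_apply_le_of_notMem_closure_support [T2Space K] (hT : IsEpsBandPreserving ε ⇑T)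
    {t : K} (ht : t ∉ closure {s | x s ≠ 0}) : |T x t| ≤ ε * ‖x‖ := by
  obtain ⟨f, hf_supp, hf_t, -⟩ := exists_continuous_zero_one_of_isClosed isClosed_closure
    isClosed_singleton (Set.disjoint_singleton_right.mpr ht)
  have hdisj : |x| ⊓ |T x t • f| = 0 := abs_inf_abs_eq_zero_iff.mpr fun s =>
    or_iff_not_imp_left.mpr fun hs => by simp [hf_supp (subset_closure hs)]
  simpa [hf_t rfl] using hT.min_abs_apply_le hdisj t

theorem min_abs_apply_le_of_mem_closure_support (hT : IsEpsBandPreserving ε ⇑T)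
    (hxy : |x| ⊓ |y| = 0) {t : K} (ht : t ∈ closure {s | y s ≠ 0}) :
    min |T x t| |T y t| ≤ ε * ‖x‖ := by
  have hclosed : IsClosed {s | min |T x s| |T y s| ≤ ε * ‖x‖} :=
    isClosed_le (by fun_prop) continuous_const
  refine hclosed.closure_subset_iff.mpr (fun s (hs : y s ≠ 0) => ?_) ht
  set w : C(K, ℝ) := (T y s / y s) • y
  have hdisj : |x| ⊓ |w| = 0 := abs_inf_abs_eq_zero_iff.mpr fun u =>
    (abs_inf_abs_eq_zero_iff.mp hxy u).imp_right fun hu => by simp [w, hu]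
  simpa [w, div_mul_cancel₀ _ hs] using hT.min_abs_apply_le hdisj s

theorem min_abs_apply_le_mul_max [T2Space K] (hε : 0 ≤ ε) (hT : IsEpsBandPreserving ε ⇑T)
    (hxy : |x| ⊓ |y| = 0) (t : K) : min |T x t| |T y t| ≤ ε * max ‖x‖ ‖y‖ := by
  by_cases ht : t ∈ closure {s | y s ≠ 0}
  · exact (hT.min_abs_apply_le_of_mem_closure_support hxy ht).trans
      (by gcongr; exact le_max_left ..)
  · exact (min_le_right _ _).trans <|
      (hT.abs_apply_le_of_notMem_closure_support ht).trans (by gcongr; exact le_max_right ..)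

theorem norm_abs_inf_abs_le [T2Space K] (hε : 0 ≤ ε) (hT : IsEpsBandPreserving ε ⇑T)
    (hxy : |x| ⊓ |y| = 0) : ‖|T x| ⊓ |T y|‖ ≤ ε * max ‖x‖ ‖y‖ := by
  refine (norm_le _ (by positivity)).mpr fun t => ?_
  calc ‖(|T x| ⊓ |T y|) t‖ = min |T x t| |T y t| :=
        abs_of_nonneg (le_min (abs_nonneg _) (abs_nonneg _))
    _ ≤ ε * max ‖x‖ ‖y‖ := hT.min_abs_apply_le_mul_max hε hxy t

theorem norm_mul_le_of_norm_le_one [T2Space K] (hε : 0 ≤ ε) (hT : IsEpsBandPreserving ε ⇑T)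
    (hxy : |x| ⊓ |y| = 0) (hx : ‖x‖ ≤ 1) (hy : ‖y‖ ≤ 1) : ‖T x * T y‖ ≤ ε * ‖T‖ := by
  refine (norm_le _ (by positivity)).mpr fun t => ?_
  have hmin : min |T x t| |T y t| ≤ ε :=
    (hT.min_abs_apply_le_mul_max hε hxy t).trans (mul_le_of_le_one_right hε (max_le hx hy))
  have hTx : |T x t| ≤ ‖T‖ := (norm_coe_le_norm _ t).trans (T.unit_le_opNorm x hx)
  have hTy : |T y t| ≤ ‖T‖ := (norm_coe_le_norm _ t).trans (T.unit_le_opNorm y hy)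
  calc ‖(T x * T y) t‖ = min |T x t| |T y t| * max |T x t| |T y t| := by
        rw [min_mul_max, mul_apply, Real.norm_eq_abs, abs_mul]
    _ ≤ ε * ‖T‖ := by gcongr; exact max_le hTx hTy

theorem norm_mul_le [T2Space K] (hε : 0 ≤ ε) (hT : IsEpsBandPreserving ε ⇑T)
    (hxy : |x| ⊓ |y| = 0) : ‖T x * T y‖ ≤ ε * ‖T‖ * ‖x‖ * ‖y‖ := by
  set x' := ‖x‖⁻¹ • x
  set y' := ‖y‖⁻¹ • y
  have hxy' : |x'| ⊓ |y'| = 0 := abs_inf_abs_eq_zero_iff.mpr fun s =>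
    (abs_inf_abs_eq_zero_iff.mp hxy s).imp (by simp [x', ·]) (by simp [y', ·])
  have hx' : ‖x'‖ ≤ 1 := mem_closedBall_zero_iff.mp (inv_norm_smul_mem_unitClosedBall x)
  have hy' : ‖y'‖ ≤ 1 := mem_closedBall_zero_iff.mp (inv_norm_smul_mem_unitClosedBall y)
  have hTx : T x = ‖x‖ • T x' := by rw [← map_smul, smul_inv_norm_smul]
  have hTy : T y = ‖y‖ • T y' := by rw [← map_smul, smul_inv_norm_smul]
  have hscale : T x * T y = (‖x‖ * ‖y‖) • (T x' * T y') := by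
    rw [hTx, hTy, smul_mul_smul_comm]
  calc ‖T x * T y‖ = ‖x‖ * ‖y‖ * ‖T x' * T y'‖ := by
        rw [hscale, norm_smul, Real.norm_of_nonneg (by positivity)]
    _ ≤ ‖x‖ * ‖y‖ * (ε * ‖T‖) := by gcongr; exact hT.norm_mul_le_of_norm_le_one hε hxy' hx' hy'
    _ = ε * ‖T‖ * ‖x‖ * ‖y‖ := by ring

end IsEpsBandPreserving

/-- An `ε`-band preserving bounded operator `T` on `C(K)` is `ε`-disjointness preserving:
`‖|T x| ⊓ |T y|‖ ≤ ε max(‖x‖,‖y‖)` for disjoint `x, y`; moreover the pointwise product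
satisfies `‖(T x)(T y)‖ ≤ ε ‖T‖ ‖x‖ ‖y‖` for disjoint `x, y`. -/
theorem epsBP_implies_epsDP_on_CK {K : Type*} [TopologicalSpace K] [CompactSpace K]
    [T2Space K] (ε : ℝ) (hε : 0 ≤ ε) (T : C(K, ℝ) →L[ℝ] C(K, ℝ))
    (hT : IsEpsBandPreserving ε ⇑T) :
    (∀ x y : C(K, ℝ), |x| ⊓ |y| = 0 → ‖|T x| ⊓ |T y|‖ ≤ ε * max ‖x‖ ‖y‖) ∧
    (∀ x y : C(K, ℝ), |x| ⊓ |y| = 0 → ‖T x * T y‖ ≤ ε * ‖T‖ * ‖x‖ * ‖y‖) :=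
  ⟨fun _ _ hxy => hT.norm_abs_inf_abs_le hε hxy, fun _ _ hxy => hT.norm_mul_le hε hxy⟩
end
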